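/- arXiv:2301.04987 — 7 statements merged into one kernel-verified Lean document; each statement's English description precedes it below -/
import Mathlib

section
/- Let c: ℤ^2 → ℤ be a configuration with finitely many values and suppose a Laurent polynomial f annihilates c (fc = 0), where f is a line polynomial in a primitive direction v ∈ ℤ^2, i.e., the support of f contains at least two points and lies in u + ℤv for some u. Then c is periodic in direction v: there exists k ≥ 1 such that c(w + kv) = c(w) for all w ∈ ℤ^2. -/
private lemma auxSeq (D : ℕ) (_hD : 1 ≤ D) (α : ℕ → ℂ) (h0 : α 0 ≠ 0) (hDne : α D ≠ 0)
    (x : ℤ → ℤ) (hrec : ∀ n : ℤ, ∑ j ∈ Finset.range (D + 1), α j * (x (n + j) : ℂ) = 0)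
    (a b : ℤ) (hab : ∀ j : ℕ, j < D → x (a + j) = x (b + j)) :
    ∀ n : ℤ, x (a + n) = x (b + n) := by
  set Q : ℤ → Prop := fun t => x (a + t) = x (b + t) with hQ
  have forward : ∀ t : ℤ, (∀ j : ℕ, j < D → Q (t + j)) → Q (t + D) := by
    intro t ht
    have e1 := hrec (a + t)
    have e2 := hrec (b + t)
    rw [Finset.sum_range_succ] at e1 e2
    have hsum : ∑ j ∈ Finset.range D, α j * (x (a + t + j) : ℂ)
        = ∑ j ∈ Finset.range D, α j * (x (b + t + j) : ℂ) := by
      refine Finset.sum_congr rfl fun j hj => ?_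
      have hq := ht j (Finset.mem_range.mp hj)
      simp only [hQ] at hq
      rw [show a + t + (j : ℤ) = a + (t + j) by ring, show b + t + (j : ℤ) = b + (t + j) by ring,
        hq]
    have hc : α D * (x (a + t + D) : ℂ) = α D * (x (b + t + D) : ℂ) := by
      linear_combination e1 - e2 - hsum
    have hc2 : (x (a + t + D) : ℂ) = (x (b + t + D) : ℂ) := mul_left_cancel₀ hDne hc
    have hc3 : x (a + t + D) = x (b + t + D) := by exact_mod_cast hc2
    simp only [hQ]
    rw [show a + (t + D) = a + t + D by ring, show b + (t + D) = b + t + D by ring]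
    exact hc3
  have backward : ∀ t : ℤ, (∀ j : ℕ, j < D → Q (t + j + 1)) → Q t := by
    intro t ht
    have e1 := hrec (a + t)
    have e2 := hrec (b + t)
    rw [Finset.sum_range_succ'] at e1 e2
    have hsum : ∑ j ∈ Finset.range D, α (j + 1) * (x (a + t + (j + 1 : ℕ)) : ℂ)
        = ∑ j ∈ Finset.range D, α (j + 1) * (x (b + t + (j + 1 : ℕ)) : ℂ) := by
      refine Finset.sum_congr rfl fun j hj => ?_
      have hq := ht j (Finset.mem_range.mp hj)
      simp only [hQ] at hq
      rw [show a + t + ((j + 1 : ℕ) : ℤ) = a + (t + j + 1) by push_cast; ring,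
        show b + t + ((j + 1 : ℕ) : ℤ) = b + (t + j + 1) by push_cast; ring, hq]
    have hc : α 0 * (x (a + t + (0 : ℕ)) : ℂ) = α 0 * (x (b + t + (0 : ℕ)) : ℂ) := by
      linear_combination e1 - e2 - hsum
    have hc2 : x (a + t + (0 : ℕ)) = x (b + t + (0 : ℕ)) := by
      exact_mod_cast mul_left_cancel₀ h0 hc
    simp only [hQ]
    simpa using hc2
  have Qnat : ∀ n : ℕ, Q (n : ℤ) := by
    intro n
    induction n using Nat.strong_induction_on with
    | _ n ih =>
      by_cases h : n < D
      · exact hab n h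
      · push_neg at h
        have hf := forward ((n : ℤ) - D) (fun j hj => by
          have hcast : (n : ℤ) - D + j = ((n - D + j : ℕ) : ℤ) := by
            push_cast [h]; ring
          rw [hcast]
          exact ih _ (by omega))
        rwa [show (n : ℤ) - D + D = n by ring] at hf
  have Qneg : ∀ n : ℕ, Q (-(n : ℤ)) := by
    intro n
    induction n using Nat.strong_induction_on with
    | _ n ih =>
      rcases Nat.eq_zero_or_pos n with rfl | hn
      · simpa using Qnat 0
      · apply backward (-(n : ℤ))
        intro j hj
        rcases le_or_gt n (j + 1) with h | h
        · have hcast : -(n : ℤ) + j + 1 = ((j + 1 - n : ℕ) : ℤ) := by push_cast [h]; ring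
          rw [hcast]; exact Qnat _
        · have hcast : -(n : ℤ) + j + 1 = -((n - (j + 1) : ℕ) : ℤ) := by
            push_cast [le_of_lt h]; ring
          rw [hcast]; exact ih _ (by omega)
  intro n
  rcases n.eq_nat_or_neg with ⟨m, rfl | rfl⟩
  exacts [Qnat m, Qneg m]


/-- The coefficient at `u` of the formal product of the Laurent polynomial `f`
(given by its finitely supported coefficient function) with the power series `c`. -/
noncomputable def prodCoeff (f : AddMonoidAlgebra ℂ (ℤ × ℤ)) (c : ℤ × ℤ → ℤ)
    (u : ℤ × ℤ) : ℂ :=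
  ∑ v ∈ f.coeff.support, f.coeff v * (c (u - v) : ℂ)

theorem periodic_of_line_polynomial_annihilator
    (c : ℤ × ℤ → ℤ) (hfin : (Set.range c).Finite)
    (v : ℤ × ℤ) (hv : IsCoprime v.1 v.2)
    (f : AddMonoidAlgebra ℂ (ℤ × ℤ))
    (hline : 2 ≤ f.coeff.support.card)
    (hsupp : ∃ u : ℤ × ℤ, ∀ w ∈ f.coeff.support, ∃ k : ℤ, w = u + k • v)
    (hann : ∀ u, prodCoeff f c u = 0) :
    ∃ k : ℤ, 1 ≤ k ∧ ∀ w, c (w + k • v) = c w := by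
  classical
  have hv0 : v ≠ 0 := by
    rintro rfl
    rw [Int.isCoprime_iff_gcd_eq_one] at hv
    simp at hv
  have hcancel : ∀ k k' : ℤ, k • v = k' • v → k = k' := by
    intro k k' h
    have h' : (k - k') • v = 0 := by rw [sub_smul, h, sub_self]
    rcases smul_eq_zero.mp h' with h'' | h''
    · omega
    · exact absurd h'' hv0
  obtain ⟨u, hu⟩ := hsupp
  set kf : ℤ × ℤ → ℤ := fun w => if h : ∃ k : ℤ, w = u + k • v then h.choose else 0 with hkf
  have hkf_spec : ∀ w ∈ f.coeff.support, w = u + kf w • v := by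
    intro w hw
    have h := hu w hw
    simp only [hkf, dif_pos h]
    exact h.choose_spec
  set S : Finset ℤ := f.coeff.support.image kf with hS
  have hScard : 2 ≤ S.card := by
    have hinj : Set.InjOn kf f.coeff.support := by
      intro w hw w' hw' hww
      rw [hkf_spec w hw, hkf_spec w' hw', hww]
    rw [hS, Finset.card_image_of_injOn hinj]
    exact hline
  have hSne : S.Nonempty := Finset.card_pos.mp (by omega)
  set m := S.min' hSne with hm
  set M := S.max' hSne with hM
  have hmM : m < M := S.min'_lt_max'_of_card (by omega)
  set D : ℕ := (M - m).toNat with hDdef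
  have hDeq : (D : ℤ) = M - m := Int.toNat_of_nonneg (by omega)
  have hD1 : 1 ≤ D := by omega
  set α : ℕ → ℂ := fun j => f.coeff (u + ((M : ℤ) - j) • v) with hα
  have hmem : ∀ k : ℤ, k ∈ S → u + k • v ∈ f.coeff.support := by
    intro k hk
    obtain ⟨w, hw, rfl⟩ := Finset.mem_image.mp hk
    rw [← hkf_spec w hw]; exact hw
  have hα0 : α 0 ≠ 0 := by
    have h1 := hmem M (S.max'_mem hSne)
    have := Finsupp.mem_support_iff.mp h1
    simpa [hα] using this
  have hαD : α D ≠ 0 := by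
    have h1 := hmem m (S.min'_mem hSne)
    have h2 : (M : ℤ) - ((D : ℕ) : ℤ) = m := by omega
    have h3 : α D = f.coeff (u + ((M : ℤ) - ((D : ℕ) : ℤ)) • v) := rfl
    rw [h3, h2]
    exact Finsupp.mem_support_iff.mp h1
  have key : ∀ w : ℤ × ℤ, ∑ j ∈ Finset.range (D + 1), α j * (c (w + (j : ℤ) • v) : ℂ) = 0 := by
    intro w
    have h0 := hann (u + w + M • v)
    rw [prodCoeff] at h0
    rw [← h0]
    set e : ℕ → ℤ × ℤ := fun j => u + ((M : ℤ) - j) • v with he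
    have hinj : ∀ a ∈ Finset.range (D + 1), ∀ b ∈ Finset.range (D + 1), e a = e b → a = b := by
      intro a _ b _ hab
      have h1 : ((M : ℤ) - a) • v = ((M : ℤ) - b) • v := by
        have := add_left_cancel hab
        exact this
      have := hcancel _ _ h1
      omega
    have hsub : f.coeff.support ⊆ (Finset.range (D + 1)).image e := by
      intro w' hw'
      have hk := hkf_spec w' hw'
      have hkS : kf w' ∈ S := Finset.mem_image_of_mem kf hw'
      have h1 : m ≤ kf w' := S.min'_le _ hkS
      have h2 : kf w' ≤ M := S.le_max' _ hkS
      refine Finset.mem_image.mpr ⟨(M - kf w').toNat, Finset.mem_range.mpr (by omega), ?_⟩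
      have h3 : (((M - kf w').toNat : ℤ)) = M - kf w' := Int.toNat_of_nonneg (by omega)
      simp only [he, h3]
      rw [show (M : ℤ) - (M - kf w') = kf w' by ring]
      exact hk.symm
    rw [Finset.sum_subset hsub (by
      intro y _ hy
      rw [Finsupp.notMem_support_iff.mp hy, zero_mul])]
    rw [Finset.sum_image hinj]
    refine Finset.sum_congr rfl fun j hj => ?_
    have harg : u + w + M • v - e j = w + (j : ℤ) • v := by
      simp only [he]
      have : (M : ℤ) • v = ((M : ℤ) - j) • v + (j : ℤ) • v := by
        rw [← add_smul]; congr 1; ring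
      rw [this]
      abel
    rw [harg]
  -- now the pigeonhole / periodicity part
  set F : Finset ℤ := hfin.toFinset with hF
  set N : ℕ := F.card ^ D with hN
  refine ⟨(N.factorial : ℤ), by exact_mod_cast N.factorial_pos, fun w => ?_⟩
  set x : ℤ → ℤ := fun n => c (w + n • v) with hx
  have hrec : ∀ n : ℤ, ∑ j ∈ Finset.range (D + 1), α j * (x (n + j) : ℂ) = 0 := by
    intro n
    have hk := key (w + n • v)
    simp only [hx]
    rw [← hk]
    refine Finset.sum_congr rfl fun j _ => ?_
    rw [show w + n • v + (j : ℤ) • v = w + (n + j) • v by rw [add_smul]; abel]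
  have hmaps : ∀ n ∈ Finset.range (N + 1),
      (fun j : Fin D => x ((n : ℤ) + (j : ℕ))) ∈ Fintype.piFinset (fun _ : Fin D => F) := by
    intro n _
    rw [Fintype.mem_piFinset]
    intro j
    rw [hF, Set.Finite.mem_toFinset]
    exact ⟨_, rfl⟩
  have hlt : (Fintype.piFinset (fun _ : Fin D => F)).card < (Finset.range (N + 1)).card := by
    rw [Finset.card_range, Fintype.card_piFinset]
    simp [hN]
  obtain ⟨i, hi, j, hj, hij, heq⟩ := Finset.exists_ne_map_eq_of_card_lt_of_maps_to hlt hmaps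
  have main : ∀ a b : ℕ, a < b → b ≤ N →
      ((fun jj : Fin D => x ((a : ℤ) + (jj : ℕ))) = fun jj : Fin D => x ((b : ℤ) + (jj : ℕ))) →
      c (w + (N.factorial : ℤ) • v) = c w := by
    intro a b hab hbN heqab
    have hper := auxSeq D hD1 α hα0 hαD x hrec a b (fun jj hjj => by
      have := congrFun heqab ⟨jj, hjj⟩
      simpa using this)
    set p : ℤ := (b : ℤ) - a with hp
    have hper' : ∀ t : ℤ, x (t + p) = x t := by
      intro t
      have h := hper (t - a)
      rw [show (a : ℤ) + (t - a) = t by ring, show (b : ℤ) + (t - a) = t + p by rw [hp]; ring] at h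
      exact h.symm
    have hiter : ∀ q : ℕ, x ((q : ℤ) * p) = x 0 := by
      intro q
      induction q with
      | zero => simp
      | succ k ihk =>
        have h := hper' ((k : ℤ) * p)
        rw [show ((k + 1 : ℕ) : ℤ) * p = (k : ℤ) * p + p by push_cast; ring, h, ihk]
    have hp1 : 1 ≤ p := by omega
    have hpN : p ≤ N := by omega
    obtain ⟨q, hq⟩ := Nat.dvd_factorial (by omega : 0 < p.toNat) (by omega : p.toNat ≤ N)
    have hcast : (N.factorial : ℤ) = (q : ℤ) * p := by
      rw [hq]; push_cast; rw [Int.toNat_of_nonneg (by omega)]; ring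
    have hfinal := hiter q
    rw [← hcast] at hfinal
    simpa [hx] using hfinal
  rcases lt_or_gt_of_ne hij with h | h
  · exact main i j h (by have := Finset.mem_range.mp hj; omega) heq
  · exact main j i h (by have := Finset.mem_range.mp hi; omega) heq.symm
end

section
/- Let f be a nonzero Laurent polynomial in two variables with a line polynomial factor in primitive direction v ∈ ℤ^2. Then f has outer edges in both directions v and −v; i.e., there exist t, t' ∈ ℤ^2 such that supp(f) ⊆ H̄_v + t with |supp(f) ∩ (l_v + t)| ≥ 2, and supp(f) ⊆ H̄_{−v} + t' with |supp(f) ∩ (l_{−v} + t')| ≥ 2. -/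
/-- A line polynomial in direction `v`: a Laurent polynomial (element of the
group algebra of `ℤ²`) which is not a monomial and whose support lies on a
line `u + ℤv`. -/
def IsLinePolyIn (v : ℤ × ℤ) (φ : AddMonoidAlgebra ℂ (ℤ × ℤ)) : Prop :=
  2 ≤ φ.coeff.support.card ∧ ∃ u : ℤ × ℤ, ∀ w ∈ φ.coeff.support, ∃ k : ℤ, w = u + k • v

/-- `⟨u, v^⊥⟩` where `v^⊥ = (v₂, -v₁)`. -/
def dotPerp (u v : ℤ × ℤ) : ℤ := u.1 * v.2 - u.2 * v.1

/-- `f` has an outer edge in direction `v`: the support lies in a translated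
closed half plane `H̄_v + t` and meets the boundary line `l_v + t` in at
least two points. -/
def HasOuterEdge (f : AddMonoidAlgebra ℂ (ℤ × ℤ)) (v : ℤ × ℤ) : Prop :=
  ∃ t : ℤ × ℤ, (∀ u ∈ f.coeff.support, 0 ≤ dotPerp (u - t) v) ∧
    2 ≤ (f.coeff.support.filter (fun u => dotPerp (u - t) v = 0)).card

lemma dotPerp_add (u w v : ℤ × ℤ) :
    dotPerp (u + w) v = dotPerp u v + dotPerp w v := by
  simp only [dotPerp, Prod.fst_add, Prod.snd_add]; ring

lemma dotPerp_sub (u w v : ℤ × ℤ) :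
    dotPerp (u - w) v = dotPerp u v - dotPerp w v := by
  simp only [dotPerp, Prod.fst_sub, Prod.snd_sub]; ring

lemma dotPerp_neg_right (u v : ℤ × ℤ) :
    dotPerp u (-v) = -dotPerp u v := by
  simp only [dotPerp, Prod.fst_neg, Prod.snd_neg]; ring

lemma dotPerp_smul_self (k : ℤ) (v : ℤ × ℤ) : dotPerp (k • v) v = 0 := by
  simp only [dotPerp, Prod.smul_fst, Prod.smul_snd, smul_eq_mul]; ring

/-- Coefficient of a product at a point with a unique decomposition. -/
lemma mem_support_mul_of_uniq (p q : AddMonoidAlgebra ℂ (ℤ × ℤ)) {x y : ℤ × ℤ}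
    (hx : x ∈ p.coeff.support) (hy : y ∈ q.coeff.support)
    (huniq : ∀ c ∈ p.coeff.support, ∀ d ∈ q.coeff.support, c + d = x + y → c = x ∧ d = y) :
    x + y ∈ (p * q).coeff.support := by
  classical
  have h : (p * q).coeff (x + y) = p.coeff x * q.coeff y := by
    rw [AddMonoidAlgebra.coeff_mul]
    rw [Finsupp.sum]
    rw [Finset.sum_eq_single_of_mem x hx]
    · rw [Finsupp.sum]
      rw [Finset.sum_eq_single_of_mem y hy]
      · simp
      · intro d hd hdy
        show (if x + d = x + y then p.coeff x * q.coeff d else 0) = 0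
        rw [if_neg]
        intro h'
        exact hdy (add_left_cancel h')
    · intro c hc hcx
      rw [Finsupp.sum]
      apply Finset.sum_eq_zero
      intro d hd
      show (if c + d = x + y then p.coeff c * q.coeff d else 0) = 0
      rw [if_neg]
      intro h'
      exact hcx (huniq c hc d hd h').1
  rw [Finsupp.mem_support_iff, h]
  exact mul_ne_zero (Finsupp.mem_support_iff.mp hx) (Finsupp.mem_support_iff.mp hy)

/-- Core lemma: if `φ` is a line polynomial in a primitive direction `v` and
`g ≠ 0`, then the extreme (w.r.t. `ε • dotPerp · v`) level set of the support
of `φ * g` contains at least two points. -/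
lemma core_lemma (v : ℤ × ℤ) (a b : ℤ) (hab : a * v.1 + b * v.2 = 1)
    (φ g : AddMonoidAlgebra ℂ (ℤ × ℤ))
    (hφcard : 2 ≤ φ.coeff.support.card) (u0 : ℤ × ℤ)
    (hline : ∀ w ∈ φ.coeff.support, ∃ k : ℤ, w = u0 + k • v)
    (hg : g ≠ 0) (ε : ℤ) (hε : ε ≠ 0) :
    ∃ z₁ z₂, z₁ ∈ (φ * g).coeff.support ∧ z₂ ∈ (φ * g).coeff.support ∧ z₁ ≠ z₂ ∧
      dotPerp z₁ v = dotPerp z₂ v ∧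
      ∀ u ∈ (φ * g).coeff.support, ε * dotPerp z₁ v ≤ ε * dotPerp u v := by
  classical
  set D : ℤ × ℤ → ℤ := fun u => dotPerp u v with hD
  set e : ℤ × ℤ → ℤ := fun u => a * u.1 + b * u.2 with he
  have hDadd : ∀ p q : ℤ × ℤ, D (p + q) = D p + D q := fun p q => dotPerp_add p q v
  have headd : ∀ p q : ℤ × ℤ, e (p + q) = e p + e q := by
    intro p q; simp only [he, Prod.fst_add, Prod.snd_add]; ring
  -- separation: D and e jointly separate points
  have hsep : ∀ w₁ w₂ : ℤ × ℤ, D w₁ = D w₂ → e w₁ = e w₂ → w₁ = w₂ := by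
    intro w₁ w₂ hDw hew
    have h1 : w₁.1 * v.2 - w₂.1 * v.2 - (w₁.2 * v.1 - w₂.2 * v.1) = 0 := by
      simp only [hD, dotPerp] at hDw; linarith
    have h2 : a * w₁.1 + b * w₁.2 = a * w₂.1 + b * w₂.2 := hew
    have hfst : w₁.1 = w₂.1 := by
      have : w₁.1 - w₂.1 = ((a * w₁.1 + b * w₁.2) - (a * w₂.1 + b * w₂.2)) * v.1 := by
        linear_combination (w₂.1 - w₁.1) * hab + b * h1
      rw [h2] at this
      have h3 : w₁.1 - w₂.1 = 0 := by simpa using this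
      omega
    have hsnd : w₁.2 = w₂.2 := by
      have : w₁.2 - w₂.2 = ((a * w₁.1 + b * w₁.2) - (a * w₂.1 + b * w₂.2)) * v.2 := by
        linear_combination (w₂.2 - w₁.2) * hab + (-a) * h1
      rw [h2] at this
      have h3 : w₁.2 - w₂.2 = 0 := by simpa using this
      omega
    exact Prod.ext hfst hsnd
  -- D is constant on the support of φ
  have hDconst : ∀ w ∈ φ.coeff.support, D w = D u0 := by
    intro w hw
    obtain ⟨k, rfl⟩ := hline w hw
    simp only [hD, dotPerp_add, dotPerp_smul_self, add_zero]
  have hφ0 : φ.coeff.support.Nonempty := Finset.card_pos.mp (by omega)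
  have hg0 : g.coeff.support.Nonempty := Finsupp.support_nonempty_iff.mpr (by simpa using hg)
  obtain ⟨w0, hw0S, hw0min⟩ := Finset.exists_min_image g.coeff.support (fun u => ε * D u) hg0
  set S : Finset (ℤ × ℤ) := g.coeff.support.filter (fun u => ε * D u = ε * D w0) with hS
  have hSne : S.Nonempty := ⟨w0, Finset.mem_filter.mpr ⟨hw0S, rfl⟩⟩
  obtain ⟨y₁, hy₁S, hy₁min⟩ := Finset.exists_min_image S e hSne
  obtain ⟨y₂, hy₂S, hy₂max⟩ := Finset.exists_min_image S (fun u => -e u) hSne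
  obtain ⟨x₁, hx₁, hx₁min⟩ := Finset.exists_min_image φ.coeff.support e hφ0
  obtain ⟨x₂, hx₂, hx₂max⟩ := Finset.exists_min_image φ.coeff.support (fun u => -e u) hφ0
  have hy₁g : y₁ ∈ g.coeff.support := (Finset.mem_filter.mp hy₁S).1
  have hy₂g : y₂ ∈ g.coeff.support := (Finset.mem_filter.mp hy₂S).1
  have hy₁lvl : ε * D y₁ = ε * D w0 := (Finset.mem_filter.mp hy₁S).2
  have hy₂lvl : ε * D y₂ = ε * D w0 := (Finset.mem_filter.mp hy₂S).2
  have hDy : D y₁ = D y₂ := mul_left_cancel₀ hε (hy₁lvl.trans hy₂lvl.symm)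
  -- uniqueness of decompositions
  have huniq : ∀ (x y : ℤ × ℤ), x ∈ φ.coeff.support → y ∈ S →
      (∀ w ∈ φ.coeff.support, e x ≤ e w) → (∀ w ∈ S, e y ≤ e w) →
      ∀ c ∈ φ.coeff.support, ∀ d ∈ g.coeff.support, c + d = x + y → c = x ∧ d = y := by
    intro x y hx hyS hxmin hymin c hc d hd hcd
    have hylvl : ε * D y = ε * D w0 := (Finset.mem_filter.mp hyS).2
    have hDc : D c = D x := (hDconst c hc).trans (hDconst x hx).symm
    have hDsum : D c + D d = D x + D y := by
      rw [← hDadd, ← hDadd, hcd]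
    have hDd : D d = D y := by omega
    have hdS : d ∈ S := Finset.mem_filter.mpr ⟨hd, by rw [hDd]; exact hylvl⟩
    have hesum : e c + e d = e x + e y := by rw [← headd, ← headd, hcd]
    have h1 : e x ≤ e c := hxmin c hc
    have h2 : e y ≤ e d := hymin d hdS
    have hec : e c = e x := by omega
    have hed : e d = e y := by omega
    exact ⟨hsep c x hDc hec, hsep d y hDd hed⟩
  have hx₂min' : ∀ w ∈ φ.coeff.support, (fun u => -e u) x₂ ≤ (fun u => -e u) w := hx₂max
  have hy₂min' : ∀ w ∈ S, (fun u => -e u) y₂ ≤ (fun u => -e u) w := hy₂max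
  -- the two extreme points of supp (φ * g)
  have hz₁ : x₁ + y₁ ∈ (φ * g).coeff.support :=
    mem_support_mul_of_uniq φ g hx₁ hy₁g (huniq x₁ y₁ hx₁ hy₁S hx₁min hy₁min)
  have huniq₂ : ∀ c ∈ φ.coeff.support, ∀ d ∈ g.coeff.support, c + d = x₂ + y₂ → c = x₂ ∧ d = y₂ := by
    intro c hc d hd hcd
    have hDc : D c = D x₂ := (hDconst c hc).trans (hDconst x₂ hx₂).symm
    have hDsum : D c + D d = D x₂ + D y₂ := by rw [← hDadd, ← hDadd, hcd]
    have hDd : D d = D y₂ := by omega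
    have hdS : d ∈ S := Finset.mem_filter.mpr ⟨hd, by rw [hDd]; exact hy₂lvl⟩
    have hesum : e c + e d = e x₂ + e y₂ := by rw [← headd, ← headd, hcd]
    have h1 : -e x₂ ≤ -e c := hx₂max c hc
    have h2 : -e y₂ ≤ -e d := hy₂max d hdS
    have hec : e c = e x₂ := by omega
    have hed : e d = e y₂ := by omega
    exact ⟨hsep c x₂ hDc hec, hsep d y₂ hDd hed⟩
  have hz₂ : x₂ + y₂ ∈ (φ * g).coeff.support :=
    mem_support_mul_of_uniq φ g hx₂ hy₂g huniq₂
  -- strictness : e x₁ < e x₂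
  have hlt : e x₁ < e x₂ := by
    obtain ⟨w₁, hw₁, w₂, hw₂, hne⟩ := Finset.one_lt_card.mp (by omega : 1 < φ.coeff.support.card)
    have hew : e w₁ ≠ e w₂ := fun h =>
      hne (hsep w₁ w₂ ((hDconst w₁ hw₁).trans (hDconst w₂ hw₂).symm) h)
    have := hx₁min w₁ hw₁
    have := hx₁min w₂ hw₂
    have := hx₂max w₁ hw₁
    have := hx₂max w₂ hw₂
    simp only at *
    omega
  have hey : e y₁ ≤ e y₂ := hy₁min y₂ hy₂S
  refine ⟨x₁ + y₁, x₂ + y₂, hz₁, hz₂, ?_, ?_, ?_⟩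
  · intro h
    have : e (x₁ + y₁) = e (x₂ + y₂) := by rw [h]
    rw [headd, headd] at this
    omega
  · show D (x₁ + y₁) = D (x₂ + y₂)
    rw [hDadd, hDadd, (hDconst x₁ hx₁).trans (hDconst x₂ hx₂).symm, hDy]
  · intro u hu
    obtain ⟨c, hc, d, hd, rfl⟩ := Finset.mem_add.mp (AddMonoidAlgebra.support_coeff_mul_subset φ g hu)
    have h1 : D c = D x₁ := (hDconst c hc).trans (hDconst x₁ hx₁).symm
    have h2 : ε * D w0 ≤ ε * D d := hw0min d hd
    have h3 : ε * D y₁ = ε * D w0 := hy₁lvl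
    show ε * D (x₁ + y₁) ≤ ε * D (c + d)
    rw [hDadd, hDadd]
    have := mul_add ε (D x₁) (D y₁)
    have := mul_add ε (D c) (D d)
    have : ε * D c = ε * D x₁ := by rw [h1]
    nlinarith [mul_add ε (D x₁) (D y₁), mul_add ε (D c) (D d)]

theorem outer_edges_of_line_polynomial_factor
    (f : AddMonoidAlgebra ℂ (ℤ × ℤ)) (hf : f ≠ 0)
    (v : ℤ × ℤ) (hv : IsCoprime v.1 v.2)
    (hfac : ∃ φ g : AddMonoidAlgebra ℂ (ℤ × ℤ), IsLinePolyIn v φ ∧ f = φ * g) :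
    HasOuterEdge f v ∧ HasOuterEdge f (-v) := by
  obtain ⟨φ, g, ⟨hcard, u0, hline⟩, rfl⟩ := hfac
  obtain ⟨a, b, hab⟩ := hv
  have hg : g ≠ 0 := by
    intro h; rw [h, mul_zero] at hf; exact hf rfl
  constructor
  · obtain ⟨z₁, z₂, hz₁, hz₂, hne, hDeq, hmin⟩ :=
      core_lemma v a b hab φ g hcard u0 hline hg 1 one_ne_zero
    refine ⟨z₁, ?_, ?_⟩
    · intro u hu
      have := hmin u hu
      rw [dotPerp_sub]
      simpa using this
    · have h2 : 1 < ((φ * g).coeff.support.filter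
          (fun u => dotPerp (u - z₁) v = 0)).card := by
        apply Finset.one_lt_card.mpr
        refine ⟨z₁, Finset.mem_filter.mpr ⟨hz₁, by rw [dotPerp_sub]; ring⟩,
          z₂, Finset.mem_filter.mpr ⟨hz₂, by rw [dotPerp_sub, hDeq]; ring⟩, ?_⟩
        exact hne
      omega
  · obtain ⟨z₁, z₂, hz₁, hz₂, hne, hDeq, hmin⟩ :=
      core_lemma v a b hab φ g hcard u0 hline hg (-1) (by norm_num)
    refine ⟨z₁, ?_, ?_⟩
    · intro u hu
      have := hmin u hu
      rw [dotPerp_sub, dotPerp_neg_right, dotPerp_neg_right]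
      omega
    · have h2 : 1 < ((φ * g).coeff.support.filter
          (fun u => dotPerp (u - z₁) (-v) = 0)).card := by
        apply Finset.one_lt_card.mpr
        refine ⟨z₁, Finset.mem_filter.mpr ⟨hz₁, by rw [dotPerp_sub, dotPerp_neg_right]; ring⟩,
          z₂, Finset.mem_filter.mpr ⟨hz₂, by rw [dotPerp_sub, dotPerp_neg_right, dotPerp_neg_right, hDeq]; ring⟩, ?_⟩
        exact hne
      omega
end

section
/- Let f be a Laurent polynomial in two variables and v ∈ ℤ^2 a primitive direction. Then f has a line polynomial factor in direction v if and only if the normal forms of the nonzero v-fibers of f (finitely many single-variable polynomials in ℂ[t]) have a nonconstant common factor. -/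
open Polynomial LaurentPolynomial AddMonoidAlgebra

noncomputable section


lemma natCast_int_inj : Function.Injective (Nat.cast : ℕ → ℤ) := fun a b h => by omega

lemma coeff_toLaurent (q : ℂ[X]) (m : ℤ) :
    (toLaurent q : ℂ[T;T⁻¹]).coeff m = if 0 ≤ m then q.coeff m.toNat else 0 := by
  rw [LaurentPolynomial.coeff_toLaurent]
  rcases m with k | k
  · have : (Int.ofNat k) = Nat.castEmbedding k := rfl
    rw [this, Finsupp.mapDomain_apply Nat.castEmbedding.injective]
    simp [Polynomial.coeff]
  · rw [Finsupp.mapDomain_notin_range, if_neg ((Int.negSucc_lt_zero k).not_ge)]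
    rintro ⟨a, ha⟩
    replace ha : (a : ℤ) = Int.negSucc k := ha
    have := Int.negSucc_lt_zero k
    omega

lemma T_mul_apply (n : ℤ) (p : ℂ[T;T⁻¹]) (i : ℤ) :
    ((T n : ℂ[T;T⁻¹]) * p).coeff i = p.coeff (i - n) := by
  have h := AddMonoidAlgebra.coeff_single_mul_apply (R := ℂ) p (1 : ℂ) n i
  rw [one_mul, neg_add_eq_sub] at h
  exact h

lemma normal_form_iff (p : ℂ[T;T⁻¹]) (n : ℤ) (q : ℂ[X]) :
    ((∀ i : ℤ, i < n → p.coeff i = 0) ∧ (∀ j : ℕ, q.coeff j = p.coeff (n + j))) ↔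
      p = (T n : ℂ[T;T⁻¹]) * toLaurent q := by
  constructor
  · rintro ⟨h1, h2⟩
    ext i
    rw [T_mul_apply, _root_.coeff_toLaurent]
    rcases lt_or_ge i n with h | h
    · rw [if_neg (by omega), h1 i h]
    · rw [if_pos (by omega)]
      have := h2 (i - n).toNat
      rw [this]; congr 1; omega
  · rintro rfl
    constructor
    · intro i hi
      rw [T_mul_apply, _root_.coeff_toLaurent, if_neg (by omega)]
    · intro j
      rw [T_mul_apply, _root_.coeff_toLaurent, if_pos (by omega)]
      congr 1; omega

lemma exists_X_pow_factor_aux (N : ℕ) : ∀ f : ℂ[X], f ≠ 0 → f.natDegree ≤ N →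
    ∃ (r : ℕ) (q : ℂ[X]), f = X ^ r * q ∧ q.coeff 0 ≠ 0 := by
  induction N with
  | zero =>
    intro f hf h
    refine ⟨0, f, by simp, ?_⟩
    intro h0
    have : f = Polynomial.C (f.coeff 0) := Polynomial.eq_C_of_natDegree_eq_zero (by omega)
    rw [this, h0, map_zero] at hf; exact hf rfl
  | succ N ih =>
    intro f hf h
    by_cases h0 : f.coeff 0 = 0
    · obtain ⟨g, rfl⟩ := Polynomial.X_dvd_iff.2 h0
      have hg : g ≠ 0 := by rintro rfl; simp at hf
      have hdeg : g.natDegree ≤ N := by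
        rw [Polynomial.natDegree_mul Polynomial.X_ne_zero hg, Polynomial.natDegree_X] at h
        omega
      obtain ⟨r, q, h1, h2⟩ := ih g hg hdeg
      exact ⟨r + 1, q, by rw [h1]; ring, h2⟩
    · exact ⟨0, f, by simp, h0⟩

lemma exists_X_pow_factor (f : ℂ[X]) (hf : f ≠ 0) :
    ∃ (r : ℕ) (q : ℂ[X]), f = X ^ r * q ∧ q.coeff 0 ≠ 0 :=
  exists_X_pow_factor_aux f.natDegree f hf le_rfl

lemma exists_normal_form (p : ℂ[T;T⁻¹]) (hp : p ≠ 0) :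
    ∃ (n : ℤ) (q : ℂ[X]), p = (T n : ℂ[T;T⁻¹]) * toLaurent q ∧ q.coeff 0 ≠ 0 := by
  obtain ⟨k, f', hf'⟩ := LaurentPolynomial.exists_T_pow p
  have hpT : p = toLaurent f' * T (-(k : ℤ)) := by
    rw [hf', mul_T_assoc, add_neg_cancel, T_zero, mul_one]
  have hf'0 : f' ≠ 0 := by
    rintro rfl
    rw [map_zero, zero_mul] at hpT; exact hp hpT
  obtain ⟨r, q, h1, h2⟩ := exists_X_pow_factor f' hf'0
  refine ⟨(r : ℤ) - k, q, ?_, h2⟩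
  rw [hpT, h1, map_mul, Polynomial.toLaurent_X_pow, T_sub]
  ring

/-- `X` is coprime to any polynomial with nonzero constant term. -/
lemma isCoprime_X_of_constant (ψ : ℂ[X]) (h : ψ.coeff 0 ≠ 0) :
    IsCoprime (X : ℂ[X]) ψ := by
  refine ⟨Polynomial.C (ψ.coeff 0)⁻¹ * -ψ.divX, Polynomial.C (ψ.coeff 0)⁻¹, ?_⟩
  have hd : X * ψ.divX + Polynomial.C (ψ.coeff 0) = ψ := Polynomial.X_mul_divX_add ψ
  have : Polynomial.C (ψ.coeff 0)⁻¹ * Polynomial.C (ψ.coeff 0) = 1 := by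
    rw [← map_mul, inv_mul_cancel₀ h, map_one]
  linear_combination (-Polynomial.C (ψ.coeff 0)⁻¹) * hd + this

lemma dvd_of_toLaurent_dvd (ψ q : ℂ[X]) (hψ : ψ.coeff 0 ≠ 0)
    (h : toLaurent ψ ∣ (toLaurent q : ℂ[T;T⁻¹])) : ψ ∣ q := by
  obtain ⟨h', hh'⟩ := h
  obtain ⟨k, h0, hh0⟩ := LaurentPolynomial.exists_T_pow h'
  have : toLaurent (q * X ^ k) = toLaurent (ψ * h0) := by
    rw [map_mul, map_mul, Polynomial.toLaurent_X_pow, hh', hh0]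
    ring
  have heq : q * X ^ k = ψ * h0 := Polynomial.toLaurent_injective this
  have hco : IsCoprime ψ ((X : ℂ[X]) ^ k) :=
    ((isCoprime_X_of_constant ψ hψ).pow_left).symm
  exact hco.dvd_of_dvd_mul_right ⟨h0, heq⟩


/-- Embedding of Laurent polynomials into two-variable Laurent polynomials (first variable). -/
def emb : LaurentPolynomial ℂ →+* AddMonoidAlgebra ℂ (ℤ × ℤ) :=
  AddMonoidAlgebra.mapDomainRingHom ℂ (AddMonoidHom.inl ℤ ℤ)

lemma emb_apply (p : LaurentPolynomial ℂ) (w : ℤ × ℤ) :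
    (emb p).coeff w = if w.2 = 0 then p.coeff w.1 else 0 := by
  have hinj : Function.Injective (AddMonoidHom.inl ℤ ℤ) := fun a b h => congrArg Prod.fst h
  show Finsupp.mapDomain (AddMonoidHom.inl ℤ ℤ) p.coeff w = _
  by_cases h : w.2 = 0
  · have hw : w = AddMonoidHom.inl ℤ ℤ w.1 := by
      ext
      · rfl
      · exact h
    rw [if_pos h]
    conv_lhs => rw [hw]
    exact Finsupp.mapDomain_apply hinj p.coeff w.1
  · rw [Finsupp.mapDomain_notin_range, if_neg h]
    rintro ⟨a, ha⟩
    exact h (by rw [← ha]; rfl)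

/-- `place p j` is `p` placed on the horizontal line at height `j`. -/
def place (p : LaurentPolynomial ℂ) (j : ℤ) : AddMonoidAlgebra ℂ (ℤ × ℤ) :=
  emb p * AddMonoidAlgebra.single ((0 : ℤ), j) (1 : ℂ)

lemma place_apply (p : LaurentPolynomial ℂ) (j : ℤ) (w : ℤ × ℤ) :
    (place p j).coeff w = if w.2 = j then p.coeff w.1 else 0 := by
  rw [place, AddMonoidAlgebra.coeff_mul_single_apply, mul_one, emb_apply]
  by_cases h : w.2 = j
  · rw [if_pos (by simp [h]), if_pos h]
    simp
  · rw [if_neg h, if_neg (by simpa [add_neg_eq_zero] using h)]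

/-- The fiber of `f` at height `j`, as a Laurent polynomial. -/
def fiber (f : AddMonoidAlgebra ℂ (ℤ × ℤ)) (j : ℤ) : LaurentPolynomial ℂ :=
  AddMonoidAlgebra.comapDomain (fun n => (n, j)) (fun a b h => congrArg Prod.fst h) f

lemma fiber_apply (f : AddMonoidAlgebra ℂ (ℤ × ℤ)) (j n : ℤ) :
    (fiber f j).coeff n = f.coeff (n, j) := rfl

lemma fiber_sum (S : Finset ℤ) (F : ℤ → AddMonoidAlgebra ℂ (ℤ × ℤ)) (j : ℤ) :
    fiber (∑ i ∈ S, F i) j = ∑ i ∈ S, fiber (F i) j := by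
  ext n
  rw [fiber_apply, AddMonoidAlgebra.coeff_sum, Finsupp.finset_sum_apply, AddMonoidAlgebra.coeff_sum,
    Finsupp.finset_sum_apply]
  exact Finset.sum_congr rfl fun i _ => (fiber_apply _ _ _).symm

lemma fiber_place (p : LaurentPolynomial ℂ) (j j' : ℤ) :
    fiber (place p j) j' = if j' = j then p else 0 := by
  ext n
  rw [fiber_apply, place_apply]
  by_cases h : j' = j
  · rw [if_pos h, if_pos h]
  · rw [if_neg h, if_neg h, AddMonoidAlgebra.coeff_zero, Finsupp.coe_zero, Pi.zero_apply]

lemma fiber_eq_zero_of_not_mem (g : AddMonoidAlgebra ℂ (ℤ × ℤ)) (i : ℤ)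
    (h : i ∉ g.coeff.support.image Prod.snd) : fiber g i = 0 := by
  ext n
  rw [fiber_apply]
  by_contra hn
  exact h (Finset.mem_image.2 ⟨(n, i), Finsupp.mem_support_iff.2 hn, rfl⟩)

lemma sum_place_fiber (f : AddMonoidAlgebra ℂ (ℤ × ℤ)) (S : Finset ℤ)
    (hS : ∀ w ∈ f.coeff.support, Prod.snd w ∈ S) :
    f = ∑ j ∈ S, place (fiber f j) j := by
  ext w
  rw [AddMonoidAlgebra.coeff_sum, Finsupp.finset_sum_apply]
  have : ∀ j ∈ S, (place (fiber f j) j).coeff w = if w.2 = j then f.coeff (w.1, w.2) else 0 := by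
    intro j _
    rw [place_apply]
    by_cases h : w.2 = j
    · rw [if_pos h, if_pos h, fiber_apply, h]
    · rw [if_neg h, if_neg h]
  rw [Finset.sum_congr rfl this, Finset.sum_ite_eq S w.2 (fun j => f.coeff (w.1, w.2))]
  by_cases h : w.2 ∈ S
  · rw [if_pos h]
  · rw [if_neg h]
    by_contra hn
    exact h (hS w (Finsupp.mem_support_iff.2 hn))

lemma place_mul_place (p q : LaurentPolynomial ℂ) (j j' : ℤ) :
    place p j * place q j' = place (p * q) (j + j') := by
  unfold place
  rw [map_mul]
  have hs : AddMonoidAlgebra.single ((0 : ℤ), j) (1 : ℂ) *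
      AddMonoidAlgebra.single ((0 : ℤ), j') (1 : ℂ)
      = AddMonoidAlgebra.single ((0 : ℤ), j + j') (1 : ℂ) := by
    rw [AddMonoidAlgebra.single_mul_single, mul_one, Prod.mk_add_mk, add_zero]
  calc emb p * AddMonoidAlgebra.single ((0 : ℤ), j) (1 : ℂ)
        * (emb q * AddMonoidAlgebra.single ((0 : ℤ), j') (1 : ℂ))
      = emb p * emb q * (AddMonoidAlgebra.single ((0 : ℤ), j) (1 : ℂ)
        * AddMonoidAlgebra.single ((0 : ℤ), j') (1 : ℂ)) := by ring
    _ = emb p * emb q * AddMonoidAlgebra.single ((0 : ℤ), j + j') (1 : ℂ) := by rw [hs]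

lemma emb_eq_place_zero (p : LaurentPolynomial ℂ) : emb p = place p 0 := by
  unfold place
  rw [show ((0 : ℤ), (0 : ℤ)) = (0 : ℤ × ℤ) from rfl, ← AddMonoidAlgebra.one_def, mul_one]

lemma fiber_place_mul (c : LaurentPolynomial ℂ) (j₀ : ℤ) (g : AddMonoidAlgebra ℂ (ℤ × ℤ)) (j : ℤ) :
    fiber (place c j₀ * g) j = c * fiber g (j - j₀) := by
  set S := g.coeff.support.image Prod.snd with hSdef
  have hg : g = ∑ i ∈ S, place (fiber g i) i := sum_place_fiber g S (by
    intro w hw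
    exact Finset.mem_image.2 ⟨w, hw, rfl⟩)
  conv_lhs => rw [hg]
  rw [Finset.mul_sum]
  have hterm : ∀ i ∈ S, place c j₀ * place (fiber g i) i = place (c * fiber g i) (j₀ + i) :=
    fun i _ => place_mul_place _ _ _ _
  rw [Finset.sum_congr rfl hterm, fiber_sum]
  have hterm2 : ∀ i ∈ S, fiber (place (c * fiber g i) (j₀ + i)) j
      = if j - j₀ = i then c * fiber g i else 0 := by
    intro i _
    rw [fiber_place]
    by_cases h : j - j₀ = i
    · rw [if_pos (by omega), if_pos h]
    · rw [if_neg (by omega), if_neg h]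
  rw [Finset.sum_congr rfl hterm2, Finset.sum_ite_eq S (j - j₀) (fun i => c * fiber g i)]
  by_cases h : j - j₀ ∈ S
  · rw [if_pos h]
  · rw [if_neg h, fiber_eq_zero_of_not_mem g _ h, mul_zero]

lemma emb_dvd_iff (c : LaurentPolynomial ℂ) (f : AddMonoidAlgebra ℂ (ℤ × ℤ)) :
    emb c ∣ f ↔ ∀ j, c ∣ fiber f j := by
  constructor
  · rintro ⟨g, rfl⟩ j
    rw [emb_eq_place_zero, fiber_place_mul]
    exact ⟨fiber g (j - 0), rfl⟩
  · intro h
    choose h' hh' using h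
    refine ⟨∑ j ∈ f.coeff.support.image Prod.snd, place (h' j) j, ?_⟩
    rw [Finset.mul_sum]
    conv_lhs => rw [sum_place_fiber f (f.coeff.support.image Prod.snd)
      (fun w hw => Finset.mem_image.2 ⟨w, hw, rfl⟩)]
    refine Finset.sum_congr rfl fun j hj => ?_
    rw [emb_eq_place_zero, place_mul_place, zero_add, hh' j]

lemma place_support (p : LaurentPolynomial ℂ) (j : ℤ) :
    (place p j).coeff.support = p.coeff.support.map ⟨fun n => (n, j), fun a b h => congrArg Prod.fst h⟩ := by
  ext w
  rw [Finsupp.mem_support_iff, place_apply, Finset.mem_map]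
  constructor
  · intro h
    by_cases h2 : w.2 = j
    · rw [if_pos h2] at h
      exact ⟨w.1, Finsupp.mem_support_iff.2 h, by ext <;> simp [h2.symm]⟩
    · rw [if_neg h2] at h
      exact absurd rfl h
  · rintro ⟨a, ha, rfl⟩
    show (if j = j then p.coeff a else 0) ≠ 0
    rw [if_pos rfl]
    exact Finsupp.mem_support_iff.1 ha


/-- `q ∈ ℂ[t]` is the normal form of the (nonzero) `v`-fiber of `f` through `u`:
for some offset `m`, the fiber vanishes below `m`, its coefficients from `m`
onwards are the coefficients of `q`, and `q` has nonzero constant term. -/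
def IsNormalFormOfFiber (f : AddMonoidAlgebra ℂ (ℤ × ℤ)) (v : ℤ × ℤ) (u : ℤ × ℤ)
    (q : Polynomial ℂ) : Prop :=
  ∃ m : ℤ, (∀ k : ℤ, k < m → f.coeff (u + k • v) = 0) ∧
    (∀ j : ℕ, q.coeff j = f.coeff (u + (m + j) • v)) ∧ q.coeff 0 ≠ 0

lemma hshift (u : ℤ × ℤ) (k : ℤ) : u + k • (((1 : ℤ), (0 : ℤ))) = (u.1 + k, u.2) := by
  ext <;> simp

lemma isNF_iff (F : AddMonoidAlgebra ℂ (ℤ × ℤ)) (u : ℤ × ℤ) (q : Polynomial ℂ) :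
    IsNormalFormOfFiber F ((1 : ℤ), (0 : ℤ)) u q ↔
      (∃ n : ℤ, fiber F u.2 = (T n : ℂ[T;T⁻¹]) * toLaurent q) ∧ q.coeff 0 ≠ 0 := by
  constructor
  · rintro ⟨m, h1, h2, h3⟩
    refine ⟨⟨u.1 + m, ?_⟩, h3⟩
    rw [← normal_form_iff]
    constructor
    · intro i hi
      rw [fiber_apply]
      have := h1 (i - u.1) (by omega)
      rw [hshift] at this
      rw [show u.1 + (i - u.1) = i from by omega] at this
      exact this
    · intro j
      have := h2 j
      rw [hshift] at this
      rw [fiber_apply, show u.1 + m + (j : ℤ) = u.1 + (m + (j : ℤ)) from by ring]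
      exact this
  · rintro ⟨⟨n, hn⟩, h3⟩
    rw [← normal_form_iff] at hn
    obtain ⟨h1, h2⟩ := hn
    refine ⟨n - u.1, ?_, ?_, h3⟩
    · intro k hk
      rw [hshift]
      have := h1 (u.1 + k) (by omega)
      rw [fiber_apply] at this
      exact this
    · intro j
      rw [hshift]
      have := h2 j
      rw [fiber_apply] at this
      rw [show u.1 + (n - u.1 + (j : ℤ)) = n + (j : ℤ) from by ring]
      exact this

lemma toLaurent_support_card (ψ : ℂ[X]) :
    (toLaurent ψ : ℂ[T;T⁻¹]).coeff.support.card = ψ.support.card := by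
  rw [LaurentPolynomial.support_coeff_toLaurent, Finset.card_map]

lemma two_le_support_card (ψ : ℂ[X]) (hdeg : 0 < ψ.degree) (h0 : ψ.coeff 0 ≠ 0) :
    2 ≤ ψ.support.card := by
  have hψ : ψ ≠ 0 := fun h => h0 (by rw [h]; simp)
  have hnd : 0 < ψ.natDegree := Polynomial.natDegree_pos_iff_degree_pos.2 hdeg
  have m1 : (0 : ℕ) ∈ ψ.support := Polynomial.mem_support_iff.2 h0
  have m2 : ψ.natDegree ∈ ψ.support :=
    Polynomial.natDegree_mem_support_of_nonzero hψ
  have : 1 < ψ.support.card := Finset.one_lt_card.2 ⟨0, m1, ψ.natDegree, m2, by omega⟩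
  omega

lemma card_le_one_of_constant (n : ℤ) (a : ℂ) :
    ((T n : ℂ[T;T⁻¹]) * toLaurent (Polynomial.C a)).coeff.support.card ≤ 1 := by
  rw [Polynomial.toLaurent_C, mul_comm, ← LaurentPolynomial.single_eq_C_mul_T]
  calc (AddMonoidAlgebra.single n a).coeff.support.card ≤ ({n} : Finset ℤ).card :=
        Finset.card_le_card Finsupp.support_single_subset
    _ = 1 := Finset.card_singleton n

lemma key (F : AddMonoidAlgebra ℂ (ℤ × ℤ)) :
    (∃ φ g : AddMonoidAlgebra ℂ (ℤ × ℤ), IsLinePolyIn ((1 : ℤ), (0 : ℤ)) φ ∧ F = φ * g) ↔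
      (∃ ψ : Polynomial ℂ, 0 < ψ.degree ∧
        ∀ (u : ℤ × ℤ) (q : Polynomial ℂ),
          IsNormalFormOfFiber F ((1 : ℤ), (0 : ℤ)) u q → ψ ∣ q) := by
  constructor
  · rintro ⟨φ, g, ⟨hcard, u₀, hline⟩, rfl⟩
    have hj₀ : ∀ w ∈ φ.coeff.support, Prod.snd w ∈ ({u₀.2} : Finset ℤ) := by
      intro w hw
      obtain ⟨k, hk⟩ := hline w hw
      rw [Finset.mem_singleton, hk, hshift]
    have hφ : φ = place (fiber φ u₀.2) u₀.2 := by
      have := sum_place_fiber φ {u₀.2} hj₀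
      simpa using this
    set c := fiber φ u₀.2 with hcdef
    have hc : 2 ≤ c.coeff.support.card := by
      rw [hφ, place_support, Finset.card_map] at hcard
      exact hcard
    have hc0 : c ≠ 0 := by
      intro h
      rw [h] at hc
      simp at hc
    obtain ⟨n₀, ψ, hcψ, hψ0⟩ := exists_normal_form c hc0
    have hdeg : 0 < ψ.degree := by
      by_contra h
      push_neg at h
      have := Polynomial.eq_C_of_degree_le_zero h
      rw [this] at hcψ
      have := card_le_one_of_constant n₀ (ψ.coeff 0)
      rw [← hcψ] at this
      omega
    refine ⟨ψ, hdeg, ?_⟩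
    intro u q hq
    rw [isNF_iff] at hq
    obtain ⟨⟨n, hn⟩, hq0⟩ := hq
    have hfib : fiber (φ * g) u.2 = c * fiber g (u.2 - u₀.2) := by
      conv_lhs => rw [hφ]
      rw [fiber_place_mul]
    have hTq : (toLaurent q : ℂ[T;T⁻¹]) = T (-n) * fiber (φ * g) u.2 := by
      rw [hn, ← mul_assoc, ← T_add, neg_add_cancel, T_zero, one_mul]
    have hdvd : toLaurent ψ ∣ (toLaurent q : ℂ[T;T⁻¹]) := by
      refine ⟨T (-n) * T n₀ * fiber g (u.2 - u₀.2), ?_⟩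
      rw [hTq, hfib, hcψ]
      ring
    exact dvd_of_toLaurent_dvd ψ q hψ0 hdvd
  · rintro ⟨ψ, hdeg, hdvd⟩
    by_cases hF : F = 0
    · refine ⟨AddMonoidAlgebra.single ((0 : ℤ), (0 : ℤ)) (1 : ℂ) +
        AddMonoidAlgebra.single ((1 : ℤ), (0 : ℤ)) (1 : ℂ), 0, ⟨?_, ?_⟩, by rw [hF, mul_zero]⟩
      · rw [AddMonoidAlgebra.coeff_add, AddMonoidAlgebra.coeff_single, AddMonoidAlgebra.coeff_single,
          Finsupp.support_add_eq]
        · rw [Finsupp.support_single_ne_zero _ one_ne_zero,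
            Finsupp.support_single_ne_zero _ one_ne_zero]
          simp
        · rw [Finsupp.support_single_ne_zero _ one_ne_zero,
            Finsupp.support_single_ne_zero _ one_ne_zero]
          simp
      · refine ⟨((0 : ℤ), (0 : ℤ)), ?_⟩
        intro w hw
        rw [AddMonoidAlgebra.coeff_add, AddMonoidAlgebra.coeff_single,
          AddMonoidAlgebra.coeff_single] at hw
        have := Finsupp.support_add hw
        rw [Finsupp.support_single_ne_zero _ one_ne_zero,
          Finsupp.support_single_ne_zero _ one_ne_zero] at this
        simp only [Finset.mem_union, Finset.mem_singleton] at this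
        rcases this with h | h
        · exact ⟨0, by rw [h, hshift]; simp⟩
        · exact ⟨1, by rw [h, hshift]; simp⟩
    · have hψ0 : ψ.coeff 0 ≠ 0 := by
        obtain ⟨w, hw⟩ := Finsupp.support_nonempty_iff.2 (show F.coeff ≠ 0 by simpa using hF)
        have hp : fiber F w.2 ≠ 0 := by
          intro h
          have h2 := Finsupp.mem_support_iff.1 hw
          apply h2
          have : (fiber F w.2).coeff w.1 = 0 := by rw [h]; rfl
          rw [fiber_apply] at this
          exact this
        obtain ⟨n, q, hnq, hq0⟩ := exists_normal_form _ hp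
        have hψq : ψ ∣ q := hdvd w q ((isNF_iff F w q).2 ⟨⟨n, hnq⟩, hq0⟩)
        intro h0
        obtain ⟨r, hr⟩ := hψq
        have : q.coeff 0 = 0 := by rw [hr, Polynomial.mul_coeff_zero, h0, zero_mul]
        exact hq0 this
      have hdd : ∀ j, (toLaurent ψ : ℂ[T;T⁻¹]) ∣ fiber F j := by
        intro j
        by_cases h : fiber F j = 0
        · rw [h]; exact dvd_zero _
        · obtain ⟨n, q, hnq, hq0⟩ := exists_normal_form _ h
          have hψq : ψ ∣ q := hdvd ((0 : ℤ), j) q ((isNF_iff F ((0 : ℤ), j) q).2 ⟨⟨n, hnq⟩, hq0⟩)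
          obtain ⟨r, hr⟩ := hψq
          exact ⟨T n * toLaurent r, by rw [hnq, hr, map_mul]; ring⟩
      obtain ⟨g, hg⟩ := (emb_dvd_iff (toLaurent ψ) F).2 hdd
      refine ⟨emb (toLaurent ψ), g, ⟨?_, ?_⟩, hg⟩
      · rw [emb_eq_place_zero, place_support, Finset.card_map, toLaurent_support_card]
        exact two_le_support_card ψ hdeg hψ0
      · refine ⟨((0 : ℤ), (0 : ℤ)), ?_⟩
        intro w hw
        rw [emb_eq_place_zero, place_support, Finset.mem_map] at hw
        obtain ⟨n, _, hn⟩ := hw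
        exact ⟨n, by rw [← hn, hshift]; simp; rfl⟩

def coordEquiv (v : ℤ × ℤ) (a b : ℤ) (h : a * v.1 + b * v.2 = 1) : (ℤ × ℤ) ≃+ (ℤ × ℤ) where
  toFun w := (a * w.1 + b * w.2, v.1 * w.2 - v.2 * w.1)
  invFun s := (v.1 * s.1 - b * s.2, v.2 * s.1 + a * s.2)
  left_inv w := by
    ext
    · show v.1 * (a * w.1 + b * w.2) - b * (v.1 * w.2 - v.2 * w.1) = w.1
      linear_combination w.1 * h
    · show v.2 * (a * w.1 + b * w.2) + a * (v.1 * w.2 - v.2 * w.1) = w.2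
      linear_combination w.2 * h
  right_inv s := by
    ext
    · show a * (v.1 * s.1 - b * s.2) + b * (v.2 * s.1 + a * s.2) = s.1
      linear_combination s.1 * h
    · show v.1 * (v.2 * s.1 + a * s.2) - v.2 * (v.1 * s.1 - b * s.2) = s.2
      linear_combination s.2 * h
  map_add' w w' := by
    ext
    · show a * (w + w').1 + b * (w + w').2 = (a * w.1 + b * w.2) + (a * w'.1 + b * w'.2)
      simp only [Prod.fst_add, Prod.snd_add]
      ring
    · show v.1 * (w + w').2 - v.2 * (w + w').1
        = (v.1 * w.2 - v.2 * w.1) + (v.1 * w'.2 - v.2 * w'.1)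
      simp only [Prod.fst_add, Prod.snd_add]
      ring

lemma coordEquiv_v (v : ℤ × ℤ) (a b : ℤ) (h : a * v.1 + b * v.2 = 1) :
    coordEquiv v a b h v = ((1 : ℤ), (0 : ℤ)) := by
  ext
  · exact h
  · show v.1 * v.2 - v.2 * v.1 = 0
    ring

lemma isLinePoly_map (e : (ℤ × ℤ) ≃+ (ℤ × ℤ)) (v : ℤ × ℤ) (φ : AddMonoidAlgebra ℂ (ℤ × ℤ)) :
    IsLinePolyIn v φ → IsLinePolyIn (e v) (AddMonoidAlgebra.domCongr ℂ ℂ e φ) := by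
  rintro ⟨hc, u, hu⟩
  refine ⟨?_, e u, ?_⟩
  · rw [AddMonoidAlgebra.domCongr_support, Finset.card_map]
    exact hc
  · intro w hw
    rw [AddMonoidAlgebra.domCongr_support, Finset.mem_map] at hw
    obtain ⟨w₀, hw₀, rfl⟩ := hw
    obtain ⟨k, rfl⟩ := hu w₀ hw₀
    exact ⟨k, by show e (u + k • v) = e u + k • e v; rw [map_add, map_zsmul]⟩

lemma domCongr_coeff (e : (ℤ × ℤ) ≃+ (ℤ × ℤ)) (f : AddMonoidAlgebra ℂ (ℤ × ℤ)) (w : ℤ × ℤ) :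
    (AddMonoidAlgebra.domCongr ℂ ℂ e f).coeff (e w) = f.coeff w := by
  rw [AddMonoidAlgebra.coeff_domCongr, AddEquiv.symm_apply_apply]

lemma isNF_map (e : (ℤ × ℤ) ≃+ (ℤ × ℤ)) (f : AddMonoidAlgebra ℂ (ℤ × ℤ)) (v u : ℤ × ℤ)
    (q : Polynomial ℂ) :
    IsNormalFormOfFiber f v u q ↔
      IsNormalFormOfFiber (AddMonoidAlgebra.domCongr ℂ ℂ e f) (e v) (e u) q := by
  unfold IsNormalFormOfFiber
  constructor
  · rintro ⟨m, h1, h2, h3⟩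
    refine ⟨m, ?_, ?_, h3⟩
    · intro k hk
      rw [← map_zsmul e, ← map_add e, domCongr_coeff]
      exact h1 k hk
    · intro j
      rw [← map_zsmul e, ← map_add e, domCongr_coeff]
      exact h2 j
  · rintro ⟨m, h1, h2, h3⟩
    refine ⟨m, ?_, ?_, h3⟩
    · intro k hk
      have := h1 k hk
      rw [← map_zsmul e, ← map_add e, domCongr_coeff] at this
      exact this
    · intro j
      have := h2 j
      rw [← map_zsmul e, ← map_add e, domCongr_coeff] at this
      exact this

theorem line_polynomial_factor_iff_fibers_common_factor
    (f : AddMonoidAlgebra ℂ (ℤ × ℤ)) (v : ℤ × ℤ) (hv : IsCoprime v.1 v.2) :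
    (∃ φ g : AddMonoidAlgebra ℂ (ℤ × ℤ), IsLinePolyIn v φ ∧ f = φ * g) ↔
      (∃ ψ : Polynomial ℂ, 0 < ψ.degree ∧
        ∀ (u : ℤ × ℤ) (q : Polynomial ℂ), IsNormalFormOfFiber f v u q → ψ ∣ q) := by
  obtain ⟨a, b, hab⟩ := hv
  set e := coordEquiv v a b hab with hedef
  have hev : e v = ((1 : ℤ), (0 : ℤ)) := coordEquiv_v v a b hab
  set E := AddMonoidAlgebra.domCongr ℂ ℂ e with hEdef
  constructor
  · rintro ⟨φ, g, hφ, rfl⟩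
    have hE : ∃ φ' g' : AddMonoidAlgebra ℂ (ℤ × ℤ),
        IsLinePolyIn ((1 : ℤ), (0 : ℤ)) φ' ∧ E (φ * g) = φ' * g' := by
      refine ⟨E φ, E g, ?_, by rw [map_mul]⟩
      rw [← hev]
      exact isLinePoly_map e v φ hφ
    obtain ⟨ψ, hdeg, hdvd⟩ := (key (E (φ * g))).1 hE
    refine ⟨ψ, hdeg, ?_⟩
    intro u q hq
    have := (isNF_map e (φ * g) v u q).1 hq
    rw [hev] at this
    exact hdvd (e u) q this
  · rintro ⟨ψ, hdeg, hdvd⟩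
    have hE : ∃ ψ' : Polynomial ℂ, 0 < ψ'.degree ∧
        ∀ (u : ℤ × ℤ) (q : Polynomial ℂ),
          IsNormalFormOfFiber (E f) ((1 : ℤ), (0 : ℤ)) u q → ψ' ∣ q := by
      refine ⟨ψ, hdeg, ?_⟩
      intro u q hq
      refine hdvd (e.symm u) q ?_
      rw [isNF_map e f v (e.symm u) q, hev, AddEquiv.apply_symm_apply]
      exact hq
    obtain ⟨φ', g', hφ', hEf⟩ := (key (E f)).2 hE
    refine ⟨E.symm φ', E.symm g', ?_, ?_⟩
    · have h1 : IsLinePolyIn (e.symm ((1 : ℤ), (0 : ℤ)))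
          (AddMonoidAlgebra.domCongr ℂ ℂ e.symm φ') :=
        isLinePoly_map e.symm ((1 : ℤ), (0 : ℤ)) φ' hφ'
      have h2 : e.symm ((1 : ℤ), (0 : ℤ)) = v := by rw [← hev, AddEquiv.symm_apply_apply]
      rw [h2] at h1
      rw [hEdef, AddMonoidAlgebra.domCongr_symm]
      exact h1
    · have : f = E.symm (E f) := (AlgEquiv.symm_apply_apply E f).symm
      rw [this, hEf, map_mul]
end
end

section
/- Let D ⊆ ℤ^2 be the 1-neighborhood of the origin in the square grid, D = {(0,0), (±1,0), (0,±1)}, and let b, a be nonnegative integers with b − a ≠ 1. Then the Laurent polynomial g(x,y) = x^{-1} + y^{-1} + 1 − (b−a) + x + y has no line polynomial factor. -/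
open AddMonoidAlgebra

/-- A line polynomial: a Laurent polynomial (element of the group algebra of `ℤ²`)
which is not a monomial and whose support lies on a single line in `ℤ²`. -/
def IsLinePoly (φ : AddMonoidAlgebra ℂ (ℤ × ℤ)) : Prop :=
  2 ≤ φ.coeff.support.card ∧
    ∃ u v : ℤ × ℤ, v ≠ 0 ∧ ∀ w ∈ φ.coeff.support, ∃ k : ℤ, w = u + k • v

/-- `f` has no line polynomial factor. -/
def HasNoLinePolyFactor (f : AddMonoidAlgebra ℂ (ℤ × ℤ)) : Prop :=
  ∀ φ : AddMonoidAlgebra ℂ (ℤ × ℤ), IsLinePoly φ → ¬ φ ∣ f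

/-- Existence of `n`-th roots of nonzero complex numbers, with nonzero root. -/
lemma exists_zpow_eq_aux (ρ : ℂ) (hρ : ρ ≠ 0) (n : ℕ) (hn : 0 < n) :
    ∃ x : ℂ, x ≠ 0 ∧ x ^ (n : ℤ) = ρ := by
  obtain ⟨z, hz⟩ := IsAlgClosed.exists_pow_nat_eq ρ hn
  refine ⟨z, ?_, ?_⟩
  · rintro rfl
    exact hρ (by simpa [zero_pow hn.ne'] using hz.symm)
  · rw [zpow_natCast, hz]

/-- Existence of `p`-th roots (for `p : ℤ`, `p ≠ 0`) of nonzero complex numbers. -/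
lemma exists_zpow_eq (ρ : ℂ) (hρ : ρ ≠ 0) (p : ℤ) (hp : p ≠ 0) :
    ∃ x : ℂ, x ≠ 0 ∧ x ^ p = ρ := by
  rcases hp.lt_or_gt with hneg | hpos
  · obtain ⟨z, hz0, hz⟩ := exists_zpow_eq_aux ρ⁻¹ (inv_ne_zero hρ) (-p).toNat (by omega)
    refine ⟨z, hz0, ?_⟩
    have h1 : ((-p).toNat : ℤ) = -p := Int.toNat_of_nonneg (by omega)
    rw [h1] at hz
    rw [← neg_neg p, zpow_neg, hz, inv_inv]
  · obtain ⟨z, hz0, hz⟩ := exists_zpow_eq_aux ρ hρ p.toNat (by omega)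
    refine ⟨z, hz0, ?_⟩
    rwa [Int.toNat_of_nonneg hpos.le] at hz

/-- A "generalized Laurent polynomial" sum with at least two distinct exponents has a
nonzero root. -/
lemma exists_root_of_sum {ι : Type*} [DecidableEq ι] (S : Finset ι) (f : ι → ℂ) (e : ι → ℤ)
    (hf : ∀ w ∈ S, f w ≠ 0) (he : Set.InjOn e S) (hcard : 2 ≤ S.card) :
    ∃ ρ : ℂ, ρ ≠ 0 ∧ ∑ w ∈ S, f w * ρ ^ (e w) = 0 := by
  have hne : S.Nonempty := Finset.card_pos.mp (by omega)
  have hTne : (S.image e).Nonempty := hne.image e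
  set N := (S.image e).min' hTne with hN
  have hNle : ∀ w ∈ S, N ≤ e w := fun w hw =>
    Finset.min'_le _ _ (Finset.mem_image_of_mem e hw)
  obtain ⟨w0, hw0S, hw0⟩ : ∃ w0 ∈ S, e w0 = N := by
    obtain ⟨w0, hw0, h⟩ := Finset.mem_image.mp ((S.image e).min'_mem hTne)
    exact ⟨w0, hw0, h⟩
  set Q : Polynomial ℂ := ∑ w ∈ S, Polynomial.C (f w) * Polynomial.X ^ (e w - N).toNat with hQ
  have hcoeff : ∀ w ∈ S, Q.coeff ((e w - N).toNat) = f w := by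
    intro w hw
    rw [hQ, Polynomial.finset_sum_coeff]
    rw [Finset.sum_eq_single w]
    · simp [Polynomial.coeff_C_mul, Polynomial.coeff_X_pow]
    · intro w' hw' hne'
      have hne2 : (e w' - N).toNat ≠ (e w - N).toNat := by
        intro heq
        apply hne'
        apply he hw' hw
        have h1 := hNle w hw
        have h2 := hNle w' hw'
        omega
      rw [Polynomial.coeff_C_mul, Polynomial.coeff_X_pow,
        if_neg (fun heq => hne2 heq.symm), mul_zero]
    · intro habs; exact absurd hw habs
  have hS1 : 1 < S.card := by omega
  obtain ⟨w1, hw1S, hw1ne⟩ := Finset.exists_mem_ne hS1 w0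
  have hew1 : e w1 ≠ N := by
    intro heq
    exact hw1ne (he hw1S hw0S (heq.trans hw0.symm))
  have hj1pos : 0 < (e w1 - N).toNat := by
    have := hNle w1 hw1S
    omega
  have hdeg : 0 < Q.degree := by
    have h1 : (e w1 - N).toNat ≤ Q.natDegree := by
      apply Polynomial.le_natDegree_of_ne_zero
      rw [hcoeff w1 hw1S]
      exact hf w1 hw1S
    apply Polynomial.natDegree_pos_iff_degree_pos.mp
    omega
  obtain ⟨ρ, hρ⟩ := Complex.exists_root hdeg
  have hρ0 : ρ ≠ 0 := by
    rintro rfl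
    have h1 : Q.coeff 0 = 0 := by
      rw [Polynomial.coeff_zero_eq_eval_zero]
      exact hρ
    have h2 : Q.coeff 0 = f w0 := by
      have : (e w0 - N).toNat = 0 := by omega
      rw [← this]
      exact hcoeff w0 hw0S
    exact hf w0 hw0S (h2.symm.trans h1)
  refine ⟨ρ, hρ0, ?_⟩
  have heval : ∑ w ∈ S, f w * ρ ^ ((e w - N).toNat) = 0 := by
    have h1 : Q.eval ρ = 0 := hρ
    rw [hQ, Polynomial.eval_finset_sum] at h1
    simpa using h1
  calc ∑ w ∈ S, f w * ρ ^ e w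
      = ∑ w ∈ S, ρ ^ N * (f w * ρ ^ ((e w - N).toNat)) := by
        refine Finset.sum_congr rfl fun w hw => ?_
        have h2 : ρ ^ e w = ρ ^ N * ρ ^ ((e w - N).toNat) := by
          rw [← zpow_natCast ρ ((e w - N).toNat), ← zpow_add₀ hρ0]
          congr 1
          have := hNle w hw
          omega
        rw [h2]
        ring
    _ = ρ ^ N * ∑ w ∈ S, f w * ρ ^ ((e w - N).toNat) := by rw [Finset.mul_sum]
    _ = 0 := by rw [heval, mul_zero]

/-- Evaluation of a Laurent polynomial in two variables along the curve
`t ↦ (x0 t^q, y0 t^{-p})`, as an algebra map to Laurent polynomials in one variable. -/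
noncomputable def torusHom (p q : ℤ) (x0 y0 : ℂ) (hx : x0 ≠ 0) (hy : y0 ≠ 0) :
    Multiplicative (ℤ × ℤ) →* AddMonoidAlgebra ℂ ℤ where
  toFun w := single (q * (Multiplicative.toAdd w).1 - p * (Multiplicative.toAdd w).2)
      (x0 ^ (Multiplicative.toAdd w).1 * y0 ^ (Multiplicative.toAdd w).2)
  map_one' := by
    simp only [toAdd_one, Prod.fst_zero, Prod.snd_zero, mul_zero, sub_zero, zpow_zero, one_mul]
    rfl
  map_mul' a b := by
    rw [single_mul_single]
    simp only [toAdd_mul, Prod.fst_add, Prod.snd_add]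
    congr 1
    · ring
    · rw [zpow_add₀ hx, zpow_add₀ hy]
      ring

theorem square_grid_r1_no_line_poly_factor (b a : ℕ) (h : (b : ℤ) - a ≠ 1) :
    HasNoLinePolyFactor
      (single (-1, 0) 1 + single (0, -1) 1 + single (0, 0) (1 - ((b : ℂ) - a)) +
        single (1, 0) 1 + single (0, 1) 1) := by
  classical
  have hc : (1 : ℂ) - ((b : ℂ) - a) ≠ 0 := by
    intro h0
    apply h
    have h2 : (((b : ℤ) - (a : ℤ) : ℤ) : ℂ) = ((1 : ℤ) : ℂ) := by
      push_cast
      exact (sub_eq_zero.mp h0).symm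
    exact_mod_cast h2
  rintro φ ⟨hcard, u, v, hv, hline⟩ ⟨ψ, hg⟩
  -- choose the parameter `κ w` of each support point along the line
  have hline' : ∀ w : ℤ × ℤ, ∃ k : ℤ, w ∈ φ.coeff.support → w = u + k • v := by
    intro w
    by_cases hw : w ∈ φ.coeff.support
    · obtain ⟨k, hk⟩ := hline w hw
      exact ⟨k, fun _ => hk⟩
    · exact ⟨0, fun hw' => absurd hw' hw⟩
  choose κ hκ using hline'
  have hinj : Set.InjOn κ φ.coeff.support := by
    intro w hw w' hw' hww
    rw [hκ w hw, hκ w' hw', hww]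
  obtain ⟨ρ, hρ0, hsum⟩ := exists_root_of_sum φ.coeff.support (fun w => φ.coeff w) κ
    (fun w hw => Finsupp.mem_support_iff.mp hw) hinj hcard
  set p := v.1 with hp_def
  set q := v.2 with hq_def
  obtain ⟨x0, y0, hx0, hy0, hxyρ⟩ :
      ∃ x0 y0 : ℂ, x0 ≠ 0 ∧ y0 ≠ 0 ∧ x0 ^ p * y0 ^ q = ρ := by
    by_cases hp : p = 0
    · have hq : q ≠ 0 := by
        intro hq
        exact hv (Prod.ext hp hq)
      obtain ⟨y0, hy0, hy⟩ := exists_zpow_eq ρ hρ0 q hq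
      exact ⟨1, y0, one_ne_zero, hy0, by rw [one_zpow, one_mul, hy]⟩
    · obtain ⟨x0, hx0, hx⟩ := exists_zpow_eq ρ hρ0 p hp
      exact ⟨x0, 1, hx0, one_ne_zero, by rw [one_zpow, mul_one, hx]⟩
  set Φ := AddMonoidAlgebra.lift ℂ (AddMonoidAlgebra ℂ ℤ) (ℤ × ℤ)
    (torusHom p q x0 y0 hx0 hy0) with hΦdef
  have hΦs : ∀ (w : ℤ × ℤ) (r : ℂ),
      Φ (single w r) = single (q * w.1 - p * w.2) (r * (x0 ^ w.1 * y0 ^ w.2)) := by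
    intro w r
    rw [hΦdef, AddMonoidAlgebra.lift_single]
    show r • single (q * w.1 - p * w.2) (x0 ^ w.1 * y0 ^ w.2) = _
    rw [AddMonoidAlgebra.smul_single, smul_eq_mul]
  -- Φ kills φ
  have hφ0 : Φ φ = 0 := by
    have hrepr : φ = ∑ w ∈ φ.coeff.support, single w (φ.coeff w) := by
      conv_lhs => rw [← AddMonoidAlgebra.sum_coeff_single φ]
      rfl
    rw [hrepr, map_sum]
    have hterm : ∀ w ∈ φ.coeff.support,
        Φ (single w (φ.coeff w)) =
          single (q * u.1 - p * u.2) ((x0 ^ u.1 * y0 ^ u.2) * (φ.coeff w * ρ ^ κ w)) := by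
      intro w hw
      rw [hΦs]
      have hw1 : w.1 = u.1 + p * κ w := by
        have h1 := congrArg Prod.fst (hκ w hw)
        simp only [Prod.fst_add, Prod.smul_fst, smul_eq_mul] at h1
        rw [h1]; ring
      have hw2 : w.2 = u.2 + q * κ w := by
        have h2 := congrArg Prod.snd (hκ w hw)
        simp only [Prod.snd_add, Prod.smul_snd, smul_eq_mul] at h2
        rw [h2]; ring
      rw [hw1, hw2]
      congr 1
      · ring
      · rw [← hxyρ, zpow_add₀ hx0, zpow_add₀ hy0, mul_zpow, ← zpow_mul, ← zpow_mul]
        ring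
    rw [Finset.sum_congr rfl hterm]
    have hss : ∑ x ∈ φ.coeff.support,
        single (q * u.1 - p * u.2) (x0 ^ u.1 * y0 ^ u.2 * (φ.coeff x * ρ ^ κ x)) =
        single (q * u.1 - p * u.2) (x0 ^ u.1 * y0 ^ u.2 * ∑ x ∈ φ.coeff.support, φ.coeff x * ρ ^ κ x) := by
      rw [Finset.mul_sum]
      exact (map_sum (AddMonoidAlgebra.singleAddHom (q * u.1 - p * u.2))
        (fun x => x0 ^ u.1 * y0 ^ u.2 * (φ.coeff x * ρ ^ κ x)) φ.coeff.support).symm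
    rw [hss, hsum, mul_zero]
    simp
  have hΦg : Φ (single (-1, 0) 1 + single (0, -1) 1 + single (0, 0) (1 - ((b : ℂ) - a)) +
      single (1, 0) 1 + single (0, 1) 1) = 0 := by
    rw [hg, map_mul, hφ0, zero_mul]
  have key : ∀ m : ℤ,
      (if q * -1 - p * 0 = m then 1 * (x0 ^ (-1 : ℤ) * y0 ^ (0 : ℤ)) else 0) +
        (if q * 0 - p * -1 = m then 1 * (x0 ^ (0 : ℤ) * y0 ^ (-1 : ℤ)) else 0) +
        (if q * 0 - p * 0 = m then (1 - ((b : ℂ) - a)) * (x0 ^ (0 : ℤ) * y0 ^ (0 : ℤ)) else 0) +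
        (if q * 1 - p * 0 = m then 1 * (x0 ^ (1 : ℤ) * y0 ^ (0 : ℤ)) else 0) +
        (if q * 0 - p * 1 = m then 1 * (x0 ^ (0 : ℤ) * y0 ^ (1 : ℤ)) else 0) = 0 := by
    intro m
    have h1 := congrArg (fun f : AddMonoidAlgebra ℂ ℤ => f.coeff m) hΦg
    simp only [map_add, hΦs] at h1
    have h2 : (Finsupp.single (q * -1 - p * 0) (1 * (x0 ^ (-1 : ℤ) * y0 ^ (0 : ℤ)))
        + Finsupp.single (q * 0 - p * -1) (1 * (x0 ^ (0 : ℤ) * y0 ^ (-1 : ℤ)))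
        + Finsupp.single (q * 0 - p * 0) ((1 - ((b : ℂ) - a)) * (x0 ^ (0 : ℤ) * y0 ^ (0 : ℤ)))
        + Finsupp.single (q * 1 - p * 0) (1 * (x0 ^ (1 : ℤ) * y0 ^ (0 : ℤ)))
        + Finsupp.single (q * 0 - p * 1) (1 * (x0 ^ (0 : ℤ) * y0 ^ (1 : ℤ))) : ℤ →₀ ℂ) m
        = 0 := h1
    simp only [Finsupp.add_apply, Finsupp.single_apply] at h2
    exact h2
  by_cases hp : p = 0
  · have hq : q ≠ 0 := by
      intro hq
      exact hv (Prod.ext hp hq)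
    have hm := key q
    rw [if_neg (by omega), if_neg (by omega), if_neg (by omega), if_pos (by omega),
      if_neg (by omega)] at hm
    simp only [zero_add, add_zero, zpow_one, zpow_zero, one_mul, mul_one] at hm
    exact hx0 hm
  · by_cases hq : q = 0
    · have hm := key p
      rw [if_neg (by omega), if_pos (by omega), if_neg (by omega), if_neg (by omega),
        if_neg (by omega)] at hm
      simp only [zero_add, add_zero, zpow_zero, one_mul, mul_one, zpow_neg_one,
        inv_eq_zero] at hm
      exact hy0 hm
    · have hm := key 0
      rw [if_neg (by omega), if_neg (by omega), if_pos (by omega), if_neg (by omega),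
        if_neg (by omega)] at hm
      simp only [zero_add, add_zero, zpow_zero, one_mul, mul_one] at hm
      exact hc hm
end

section
/- For every r ≥ 2, let D_r = {(i,j) ∈ ℤ^2 : |i| + |j| ≤ r} be the r-neighborhood of the origin in the square grid, and let b, a be any integers. Then the Laurent polynomial g = ∑_{(i,j) ∈ D_r} x^{-i}y^{-j} − (b−a) has no line polynomial factor. -/
open AddMonoidAlgebra

/-- The `r`-neighborhood of the origin in the square grid. -/
noncomputable def squareBall (r : ℕ) : Finset (ℤ × ℤ) :=
  (Finset.Icc (-(r : ℤ)) r ×ˢ Finset.Icc (-(r : ℤ)) r).filter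
    (fun p => |p.1| + |p.2| ≤ (r : ℤ))

/-! ### Auxiliary machinery -/

noncomputable def psiF (p q : ℤ) (A B : ℂ) (hA : A ≠ 0) (hB : B ≠ 0) :
    Multiplicative (ℤ × ℤ) →* AddMonoidAlgebra ℂ ℤ where
  toFun w := single (w.toAdd.1 * q - w.toAdd.2 * p) (A ^ w.toAdd.1 * B ^ w.toAdd.2)
  map_one' := by
    show single ((0:ℤ×ℤ).1 * q - (0:ℤ×ℤ).2 * p) (A ^ (0:ℤ×ℤ).1 * B ^ (0:ℤ×ℤ).2) = 1
    rw [AddMonoidAlgebra.one_def]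
    norm_num
  map_mul' x y := by
    show single _ _ = single _ _ * single _ _
    rw [AddMonoidAlgebra.single_mul_single]
    have h1 : Multiplicative.toAdd (x * y) = Multiplicative.toAdd x + Multiplicative.toAdd y := rfl
    rw [h1, Prod.fst_add, Prod.snd_add]
    congr 1
    · ring
    · rw [zpow_add₀ hA, zpow_add₀ hB]; ring

noncomputable def psiHom (p q : ℤ) (A B : ℂ) (hA : A ≠ 0) (hB : B ≠ 0) :
    AddMonoidAlgebra ℂ (ℤ × ℤ) →ₐ[ℂ] AddMonoidAlgebra ℂ ℤ :=
  AddMonoidAlgebra.lift ℂ (AddMonoidAlgebra ℂ ℤ) (ℤ × ℤ) (psiF p q A B hA hB)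

theorem psiHom_single (p q : ℤ) (A B : ℂ) (hA : A ≠ 0) (hB : B ≠ 0) (w : ℤ × ℤ) (c : ℂ) :
    psiHom p q A B hA hB (single w c) =
      single (w.1 * q - w.2 * p) (c * (A ^ w.1 * B ^ w.2)) := by
  rw [psiHom, AddMonoidAlgebra.lift_single]
  show c • single (w.1 * q - w.2 * p) (A ^ w.1 * B ^ w.2) = _
  rw [AddMonoidAlgebra.smul_single, smul_eq_mul]

theorem exists_zpow_root (z : ℂ) (hz : z ≠ 0) (n : ℤ) (hn : n ≠ 0) :
    ∃ x : ℂ, x ≠ 0 ∧ x ^ n = z := by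
  rcases lt_or_gt_of_ne hn with h | h
  · obtain ⟨x, hx⟩ := IsAlgClosed.exists_pow_nat_eq z⁻¹ (n := (-n).toNat) (by omega)
    have hx0 : x ≠ 0 := by
      intro h0; rw [h0, zero_pow (by omega : (-n).toNat ≠ 0)] at hx
      exact hz (by simpa using hx.symm)
    refine ⟨x, hx0, ?_⟩
    have h2 : x ^ n = (x ^ (-n).toNat)⁻¹ := by
      rw [← zpow_natCast, ← zpow_neg, Int.toNat_of_nonneg (by omega : (0:ℤ) ≤ -n), neg_neg]
    rw [h2, hx, inv_inv]
  · obtain ⟨x, hx⟩ := IsAlgClosed.exists_pow_nat_eq z (n := n.toNat) (by omega)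
    have hx0 : x ≠ 0 := by
      intro h0; rw [h0, zero_pow (by omega : n.toNat ≠ 0)] at hx
      exact hz hx.symm
    refine ⟨x, hx0, ?_⟩
    rw [show n = (n.toNat : ℤ) by omega, zpow_natCast, hx]

theorem line_sum_root (φ : AddMonoidAlgebra ℂ (ℤ × ℤ)) (hcard : 2 ≤ φ.coeff.support.card)
    (u v : ℤ × ℤ) (hv : v ≠ 0) (hsupp : ∀ w ∈ φ.coeff.support, ∃ k : ℤ, w = u + k • v) :
    ∃ A B : ℂ, A ≠ 0 ∧ B ≠ 0 ∧ A ^ v.1 * B ^ v.2 ≠ 0 ∧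
      ∑ w ∈ φ.coeff.support, φ.coeff w * (A ^ w.1 * B ^ w.2) = 0 := by
  classical
  set k : ℤ × ℤ → ℤ := fun w => if hw : w ∈ φ.coeff.support then (hsupp w hw).choose else 0 with hkdef
  have hkspec : ∀ w ∈ φ.coeff.support, w = u + (k w) • v := by
    intro w hw
    simp only [hkdef, dif_pos hw]
    exact (hsupp w hw).choose_spec
  have hkinj : ∀ w ∈ φ.coeff.support, ∀ w' ∈ φ.coeff.support, k w = k w' → w = w' := by
    intro w hw w' hw' hkk
    rw [hkspec w hw, hkspec w' hw', hkk]
  have hne : φ.coeff.support.Nonempty := Finset.card_pos.mp (by omega)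
  set K := φ.coeff.support.image k with hK
  have hKne : K.Nonempty := hne.image _
  set m := K.min' hKne with hm
  have hmle : ∀ w ∈ φ.coeff.support, m ≤ k w := fun w hw =>
    Finset.min'_le _ _ (Finset.mem_image_of_mem k hw)
  set e : ℤ × ℤ → ℕ := fun w => (k w - m).toNat with he
  have hke : ∀ w ∈ φ.coeff.support, k w = m + (e w : ℤ) := by
    intro w hw; have := hmle w hw; simp only [he]; omega
  set P : Polynomial ℂ := ∑ w ∈ φ.coeff.support, Polynomial.C (φ.coeff w) * Polynomial.X ^ (e w) with hP
  have hPcoeff : ∀ w ∈ φ.coeff.support, P.coeff (e w) = φ.coeff w := by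
    intro w hw
    rw [hP, Polynomial.finset_sum_coeff]
    rw [Finset.sum_eq_single w]
    · simp [Polynomial.coeff_C_mul, Polynomial.coeff_X_pow]
    · intro w' hw' hne'
      rw [Polynomial.coeff_C_mul, Polynomial.coeff_X_pow, if_neg, mul_zero]
      intro hee
      have hkk : k w' = k w := by
        have h1 := hmle w hw; have h2 := hmle w' hw'
        simp only [he] at hee; omega
      exact hne' (hkinj w' hw' w hw hkk)
    · intro hww; exact absurd hw hww
  obtain ⟨wmin, hwmin, hwminm⟩ : ∃ w ∈ φ.coeff.support, k w = m := by
    obtain ⟨w, hw, hwk⟩ := Finset.mem_image.mp (Finset.min'_mem K hKne)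
    exact ⟨w, hw, hwk⟩
  have hemin : e wmin = 0 := by simp only [he]; omega
  have hP0 : P.coeff 0 ≠ 0 := by
    have := hPcoeff wmin hwmin
    rw [hemin] at this
    rw [this]
    exact Finsupp.mem_support_iff.mp hwmin
  obtain ⟨wmax, hwmax, hwmaxM⟩ : ∃ w ∈ φ.coeff.support, k w = K.max' hKne := by
    obtain ⟨w, hw, hwk⟩ := Finset.mem_image.mp (Finset.max'_mem K hKne)
    exact ⟨w, hw, hwk⟩
  have hmM : m < K.max' hKne := by
    obtain ⟨w1, hw1, w2, hw2, hww⟩ := Finset.one_lt_card.mp (by omega : 1 < φ.coeff.support.card)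
    have : k w1 ≠ k w2 := fun hc => hww (hkinj w1 hw1 w2 hw2 hc)
    exact Finset.min'_lt_max' _ (Finset.mem_image_of_mem k hw1) (Finset.mem_image_of_mem k hw2) this
  have hdegpos : 0 < P.degree := by
    have h1 : 0 < e wmax := by simp only [he]; omega
    have h2 : P.coeff (e wmax) ≠ 0 := by
      rw [hPcoeff wmax hwmax]; exact Finsupp.mem_support_iff.mp hwmax
    have h3 : (e wmax : ℕ) ≤ P.natDegree := Polynomial.le_natDegree_of_ne_zero h2
    have h4 : P ≠ 0 := fun hc => hP0 (by rw [hc]; simp)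
    rw [Polynomial.degree_eq_natDegree h4]
    exact_mod_cast by omega
  obtain ⟨ζ, hζroot⟩ := Complex.exists_root hdegpos
  have hζ0 : ζ ≠ 0 := by
    intro hc
    rw [hc] at hζroot
    exact hP0 (by rwa [Polynomial.coeff_zero_eq_eval_zero])
  have hvcases : v.1 ≠ 0 ∨ v.2 ≠ 0 := by
    by_contra hcon
    push_neg at hcon
    exact hv (Prod.ext hcon.1 hcon.2)
  obtain ⟨A, B, hA, hB, hAB⟩ : ∃ A B : ℂ, A ≠ 0 ∧ B ≠ 0 ∧ A ^ v.1 * B ^ v.2 = ζ := by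
    rcases hvcases with h1 | h2
    · obtain ⟨x, hx, hxe⟩ := exists_zpow_root ζ hζ0 v.1 h1
      exact ⟨x, 1, hx, one_ne_zero, by rw [one_zpow, mul_one, hxe]⟩
    · obtain ⟨x, hx, hxe⟩ := exists_zpow_root ζ hζ0 v.2 h2
      exact ⟨1, x, one_ne_zero, hx, by rw [one_zpow, one_mul, hxe]⟩
  refine ⟨A, B, hA, hB, by rw [hAB]; exact hζ0, ?_⟩
  have hterm : ∀ w ∈ φ.coeff.support,
      φ.coeff w * (A ^ w.1 * B ^ w.2) = (A ^ u.1 * B ^ u.2 * ζ ^ m) * (φ.coeff w * ζ ^ (e w)) := by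
    intro w hw
    have hw1 : w.1 = u.1 + k w * v.1 := by
      have h' := congrArg Prod.fst (hkspec w hw)
      simpa [smul_eq_mul] using h'
    have hw2 : w.2 = u.2 + k w * v.2 := by
      have h' := congrArg Prod.snd (hkspec w hw)
      simpa [smul_eq_mul] using h'
    have hz1 : A ^ w.1 * B ^ w.2 = (A ^ u.1 * B ^ u.2) * ζ ^ (k w) := by
      rw [hw1, hw2, zpow_add₀ hA, zpow_add₀ hB, mul_comm (k w) v.1, mul_comm (k w) v.2,
        zpow_mul, zpow_mul, ← hAB, mul_zpow]
      ring
    rw [hz1, hke w hw, zpow_add₀ hζ0, zpow_natCast]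
    ring
  rw [Finset.sum_congr rfl hterm, ← Finset.mul_sum]
  have hev : ∑ w ∈ φ.coeff.support, φ.coeff w * ζ ^ (e w) = P.eval ζ := by
    rw [hP, Polynomial.eval_finset_sum]
    refine Finset.sum_congr rfl fun w hw => ?_
    simp [Polynomial.eval_mul, Polynomial.eval_pow]
  rw [hev, hζroot, mul_zero]

theorem mem_squareBall (r : ℕ) (w : ℤ × ℤ) :
    w ∈ squareBall r ↔ |w.1| + |w.2| ≤ (r : ℤ) := by
  simp only [squareBall, Finset.mem_filter, Finset.mem_product, Finset.mem_Icc]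
  simp only [Int.abs_eq_natAbs]
  constructor
  · exact fun h => h.2
  · intro h
    refine ⟨⟨⟨?_, ?_⟩, ?_, ?_⟩, h⟩ <;> omega

theorem singA (r : ℕ) (p q : ℤ) (hpq : |p| < |q|) :
    (squareBall r).filter (fun w => w.1 * q - w.2 * p = r * q) = {((r : ℤ), 0)} := by
  have hq : q ≠ 0 := by intro h; rw [h, abs_zero] at hpq; have := abs_nonneg p; omega
  ext w
  simp only [Finset.mem_filter, mem_squareBall, Finset.mem_singleton, Prod.ext_iff]
  constructor
  · rintro ⟨hball, hline⟩
    have h1 : |w.1 * q - w.2 * p| ≤ |w.1| * |q| + |w.2| * |p| := by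
      calc |w.1 * q - w.2 * p| ≤ |w.1 * q| + |w.2 * p| := abs_sub _ _
        _ = |w.1| * |q| + |w.2| * |p| := by rw [abs_mul, abs_mul]
    have h2 : |w.2| * |p| ≤ |w.2| * (|q| - 1) :=
      mul_le_mul_of_nonneg_left (by omega) (abs_nonneg _)
    have h3 : (|w.1| + |w.2|) * |q| ≤ (r : ℤ) * |q| :=
      mul_le_mul_of_nonneg_right hball (abs_nonneg _)
    have h4 : |w.1 * q - w.2 * p| = (r : ℤ) * |q| := by
      rw [hline, abs_mul, abs_of_nonneg (by positivity : (0:ℤ) ≤ (r:ℤ))]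
    have h5 : |w.2| * (|q| - 1) = |w.2| * |q| - |w.2| := by ring
    have h6 : (|w.1| + |w.2|) * |q| = |w.1| * |q| + |w.2| * |q| := by ring
    have h7 : |w.2| ≤ 0 := by linarith
    have hw2 : w.2 = 0 := abs_eq_zero.mp (le_antisymm h7 (abs_nonneg _))
    rw [hw2] at hline
    simp only [zero_mul, sub_zero] at hline
    exact ⟨mul_right_cancel₀ hq hline, hw2⟩
  · rintro ⟨h1, h2⟩
    rw [h1, h2]
    norm_num

theorem singB (r : ℕ) (p q : ℤ) (hpq : |q| < |p|) :
    (squareBall r).filter (fun w => w.1 * q - w.2 * p = -(r * p)) = {((0 : ℤ), (r : ℤ))} := by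
  have hp : p ≠ 0 := by intro h; rw [h, abs_zero] at hpq; have := abs_nonneg q; omega
  ext w
  simp only [Finset.mem_filter, mem_squareBall, Finset.mem_singleton, Prod.ext_iff]
  constructor
  · rintro ⟨hball, hline⟩
    have h1 : |w.1 * q - w.2 * p| ≤ |w.1| * |q| + |w.2| * |p| := by
      calc |w.1 * q - w.2 * p| ≤ |w.1 * q| + |w.2 * p| := abs_sub _ _
        _ = |w.1| * |q| + |w.2| * |p| := by rw [abs_mul, abs_mul]
    have h2 : |w.1| * |q| ≤ |w.1| * (|p| - 1) :=
      mul_le_mul_of_nonneg_left (by omega) (abs_nonneg _)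
    have h3 : (|w.1| + |w.2|) * |p| ≤ (r : ℤ) * |p| :=
      mul_le_mul_of_nonneg_right hball (abs_nonneg _)
    have h4 : |w.1 * q - w.2 * p| = (r : ℤ) * |p| := by
      rw [hline, abs_neg, abs_mul, abs_of_nonneg (by positivity : (0:ℤ) ≤ (r:ℤ))]
    have h5 : |w.1| * (|p| - 1) = |w.1| * |p| - |w.1| := by ring
    have h6 : (|w.1| + |w.2|) * |p| = |w.1| * |p| + |w.2| * |p| := by ring
    have h7 : |w.1| ≤ 0 := by linarith
    have hw1 : w.1 = 0 := abs_eq_zero.mp (le_antisymm h7 (abs_nonneg _))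
    rw [hw1] at hline
    simp only [zero_mul, zero_sub] at hline
    have h8 : w.2 * p = (r : ℤ) * p := by linarith
    exact ⟨hw1, mul_right_cancel₀ hp h8⟩
  · rintro ⟨h1, h2⟩
    rw [h1, h2]
    norm_num

theorem diag1 (r j : ℕ) (h1 : r ≤ j + 1) (h2 : j ≤ r) :
    (squareBall r).filter (fun w => w.1 - w.2 = (j : ℤ)) =
      (Finset.range (j + 1)).image (fun k : ℕ => ((k : ℤ), (k : ℤ) - (j : ℤ))) := by
  ext w
  simp only [Finset.mem_filter, mem_squareBall, Finset.mem_image, Finset.mem_range,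
    Prod.ext_iff, Int.abs_eq_natAbs]
  constructor
  · rintro ⟨hball, hline⟩
    exact ⟨w.1.toNat, by omega, by omega, by omega⟩
  · rintro ⟨k, hk, hk1, hk2⟩
    exact ⟨by omega, by omega⟩

theorem diag2 (r j : ℕ) (h1 : r ≤ j + 1) (h2 : j ≤ r) :
    (squareBall r).filter (fun w => w.1 + w.2 = (j : ℤ)) =
      (Finset.range (j + 1)).image (fun k : ℕ => ((k : ℤ), (j : ℤ) - (k : ℤ))) := by
  ext w
  simp only [Finset.mem_filter, mem_squareBall, Finset.mem_image, Finset.mem_range,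
    Prod.ext_iff, Int.abs_eq_natAbs]
  constructor
  · rintro ⟨hball, hline⟩
    exact ⟨w.1.toNat, by omega, by omega, by omega⟩
  · rintro ⟨k, hk, hk1, hk2⟩
    exact ⟨by omega, by omega⟩

theorem square_grid_r_ge_two_no_line_poly_factor (r : ℕ) (hr : 2 ≤ r) (b a : ℤ) :
    HasNoLinePolyFactor
      ((∑ p ∈ squareBall r, single (-p.1, -p.2) (1 : ℂ)) -
        single (0, 0) ((b : ℂ) - (a : ℂ))) := by
  rintro φ ⟨hcard, u, v, hv, hsupp⟩ ⟨h, hg⟩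
  classical
  obtain ⟨A, B, hA, hB, hABne, hsum⟩ := line_sum_root φ hcard u v hv hsupp
  set Ψ := psiHom v.1 v.2 A B hA hB with hΨ
  have hΨφ : Ψ φ = 0 := by
    conv_lhs => rw [← AddMonoidAlgebra.sum_coeff_single φ]
    rw [Finsupp.sum, map_sum]
    have hterm : ∀ w ∈ φ.coeff.support, Ψ (single w (φ.coeff w)) =
        single (u.1 * v.2 - u.2 * v.1) (φ.coeff w * (A ^ w.1 * B ^ w.2)) := by
      intro w hw
      rw [hΨ, psiHom_single]
      obtain ⟨kk, hkk⟩ := hsupp w hw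
      have h1 : w.1 = u.1 + kk * v.1 := by
        have h' := congrArg Prod.fst hkk; simpa [smul_eq_mul] using h'
      have h2 : w.2 = u.2 + kk * v.2 := by
        have h' := congrArg Prod.snd hkk; simpa [smul_eq_mul] using h'
      congr 1
      rw [h1, h2]; ring
    rw [Finset.sum_congr rfl hterm]
    simp only [← AddMonoidAlgebra.ofCoeff_single]
    rw [← AddMonoidAlgebra.ofCoeff_sum, ← Finsupp.single_finsetSum, hsum, Finsupp.single_zero]
    rfl
  have hΨg : Ψ ((∑ p ∈ squareBall r, single (-p.1, -p.2) (1 : ℂ)) -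
      single (0, 0) ((b : ℂ) - (a : ℂ))) = 0 := by
    rw [hg, map_mul, hΨφ, zero_mul]
  have hcoe : ∀ n : ℤ, n ≠ 0 →
      ∑ w ∈ (squareBall r).filter (fun w => w.1 * v.2 - w.2 * v.1 = n),
        A ^ (-w.1) * B ^ (-w.2) = 0 := by
    intro n hn
    have h1 : Ψ ((∑ p ∈ squareBall r, single (-p.1, -p.2) (1 : ℂ)) -
        single (0, 0) ((b : ℂ) - (a : ℂ)))
        = (∑ p ∈ squareBall r,
            single (-(p.1 * v.2 - p.2 * v.1)) (A ^ (-p.1) * B ^ (-p.2)))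
          - single (0 : ℤ) ((b : ℂ) - (a : ℂ)) := by
      rw [map_sub, map_sum]
      congr 1
      · refine Finset.sum_congr rfl fun w _ => ?_
        rw [hΨ, psiHom_single]
        have e1 : ((-w.1, -w.2) : ℤ × ℤ).1 * v.2 - ((-w.1, -w.2) : ℤ × ℤ).2 * v.1
            = -(w.1 * v.2 - w.2 * v.1) := by simp; ring
        rw [e1, one_mul]
      · rw [hΨ, psiHom_single]
        norm_num
    have h2 : (∑ p ∈ squareBall r,
          single (-(p.1 * v.2 - p.2 * v.1)) (A ^ (-p.1) * B ^ (-p.2)))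
        - single (0 : ℤ) ((b : ℂ) - (a : ℂ)) = 0 := by
      rw [← h1]; exact hΨg
    have h3 := congrArg (fun F : AddMonoidAlgebra ℂ ℤ => F.coeff (-n)) h2
    simp only [AddMonoidAlgebra.coeff_zero, Finsupp.coe_zero, Pi.zero_apply] at h3
    rw [AddMonoidAlgebra.coeff_sub, Finsupp.sub_apply, AddMonoidAlgebra.coeff_sum, Finset.sum_apply'] at h3
    have h4 : (single (0 : ℤ) ((b : ℂ) - (a : ℂ))).coeff (-n) = 0 :=
      Finsupp.single_eq_of_ne (by omega)
    rw [h4, sub_zero] at h3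
    have h5 : ∀ p ∈ squareBall r,
        (single (-(p.1 * v.2 - p.2 * v.1)) (A ^ (-p.1) * B ^ (-p.2)) :
          AddMonoidAlgebra ℂ ℤ).coeff (-n)
        = if p.1 * v.2 - p.2 * v.1 = n then A ^ (-p.1) * B ^ (-p.2) else 0 := by
      intro p _
      rw [AddMonoidAlgebra.coeff_single, Finsupp.single_apply]
      by_cases hc : p.1 * v.2 - p.2 * v.1 = n
      · rw [if_pos (by omega), if_pos hc]
      · rw [if_neg (by omega), if_neg hc]
    rw [Finset.sum_congr rfl h5] at h3
    rw [Finset.sum_filter]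
    exact h3
  have hrz : ((r : ℤ)) ≠ 0 := by exact_mod_cast (by omega : r ≠ 0)
  rcases lt_trichotomy |v.1| |v.2| with hlt | heq | hgt
  · -- |v.1| < |v.2|
    have hq : v.2 ≠ 0 := by
      intro hc; rw [hc, abs_zero] at hlt; have := abs_nonneg v.1; omega
    have := hcoe ((r : ℤ) * v.2) (mul_ne_zero hrz hq)
    rw [singA r v.1 v.2 hlt, Finset.sum_singleton] at this
    exact (mul_ne_zero (zpow_ne_zero _ hA) (zpow_ne_zero _ hB)) this
  · -- |v.1| = |v.2|
    have hq : v.2 ≠ 0 := by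
      intro hc
      rw [hc, abs_zero, abs_eq_zero] at heq
      exact hv (Prod.ext heq hc)
    rcases abs_eq_abs.mp heq with hd | hd
    · -- v.1 = v.2 : diagonal direction (1,1)
      set C : ℂ := (A * B)⁻¹ with hC
      have hCne : C ≠ 0 := inv_ne_zero (mul_ne_zero hA hB)
      have key : ∀ j : ℕ, r ≤ j + 1 → j ≤ r → 1 ≤ j →
          ∑ kk ∈ Finset.range (j + 1), C ^ kk = 0 := by
        intro j hj1 hj2 hj3
        have hn : (j : ℤ) * v.2 ≠ 0 :=
          mul_ne_zero (by exact_mod_cast (by omega : j ≠ 0)) hq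
        have h0 := hcoe ((j : ℤ) * v.2) hn
        have hfilter : (squareBall r).filter
              (fun w => w.1 * v.2 - w.2 * v.1 = (j : ℤ) * v.2)
            = (squareBall r).filter (fun w => w.1 - w.2 = (j : ℤ)) := by
          apply Finset.filter_congr
          intro w _
          constructor
          · intro hw
            have hw' : (w.1 - w.2) * v.2 = (j : ℤ) * v.2 := by
              rw [← hw, hd]; ring
            simpa using mul_right_cancel₀ hq hw'
          · intro hw
            rw [hd, show w.1 * v.2 - w.2 * v.2 = (w.1 - w.2) * v.2 by ring, hw]
        rw [hfilter, diag1 r j hj1 hj2] at h0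
        rw [Finset.sum_image (by
          intro x _ y _ hxy
          have h' : ((x : ℤ)) = ((y : ℤ)) := (Prod.ext_iff.mp hxy).1
          exact_mod_cast h')] at h0
        have hterm : ∀ kk : ℕ,
            A ^ (-((kk : ℤ))) * B ^ (-((kk : ℤ) - (j : ℤ)))
              = B ^ ((j : ℤ)) * C ^ kk := by
          intro kk
          rw [hC, neg_sub, zpow_sub₀ hB, zpow_neg, zpow_natCast, zpow_natCast, inv_pow,
            mul_pow, mul_inv]
          field_simp
          norm_cast
        simp only [hterm] at h0
        rw [← Finset.mul_sum] at h0
        exact (mul_eq_zero.mp h0).resolve_left (zpow_ne_zero _ hB)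
      have k1 := key r (by omega) le_rfl (by omega)
      have k2 := key (r - 1) (by omega) (by omega) (by omega)
      rw [show r - 1 + 1 = r by omega] at k2
      rw [Finset.sum_range_succ, k2, zero_add] at k1
      exact pow_ne_zero r hCne k1
    · -- v.1 = -v.2 : diagonal direction (1,-1)
      set C : ℂ := A⁻¹ * B with hC
      have hCne : C ≠ 0 := mul_ne_zero (inv_ne_zero hA) hB
      have key : ∀ j : ℕ, r ≤ j + 1 → j ≤ r → 1 ≤ j →
          ∑ kk ∈ Finset.range (j + 1), C ^ kk = 0 := by
        intro j hj1 hj2 hj3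
        have hn : (j : ℤ) * v.2 ≠ 0 :=
          mul_ne_zero (by exact_mod_cast (by omega : j ≠ 0)) hq
        have h0 := hcoe ((j : ℤ) * v.2) hn
        have hfilter : (squareBall r).filter
              (fun w => w.1 * v.2 - w.2 * v.1 = (j : ℤ) * v.2)
            = (squareBall r).filter (fun w => w.1 + w.2 = (j : ℤ)) := by
          apply Finset.filter_congr
          intro w _
          constructor
          · intro hw
            have hw' : (w.1 + w.2) * v.2 = (j : ℤ) * v.2 := by
              rw [← hw, hd]; ring
            simpa using mul_right_cancel₀ hq hw'
          · intro hw
            rw [hd, show w.1 * v.2 - w.2 * -v.2 = (w.1 + w.2) * v.2 by ring, hw]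
        rw [hfilter, diag2 r j hj1 hj2] at h0
        rw [Finset.sum_image (by
          intro x _ y _ hxy
          have h' : ((x : ℤ)) = ((y : ℤ)) := (Prod.ext_iff.mp hxy).1
          exact_mod_cast h')] at h0
        have hterm : ∀ kk : ℕ,
            A ^ (-((kk : ℤ))) * B ^ (-((j : ℤ) - (kk : ℤ)))
              = B ^ (-(j : ℤ)) * C ^ kk := by
          intro kk
          simp only [hC, zpow_neg, zpow_sub₀ hB, zpow_natCast, mul_pow, inv_pow, mul_inv]
          field_simp
        simp only [hterm] at h0
        rw [← Finset.mul_sum] at h0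
        exact (mul_eq_zero.mp h0).resolve_left (zpow_ne_zero _ hB)
      have k1 := key r (by omega) le_rfl (by omega)
      have k2 := key (r - 1) (by omega) (by omega) (by omega)
      rw [show r - 1 + 1 = r by omega] at k2
      rw [Finset.sum_range_succ, k2, zero_add] at k1
      exact pow_ne_zero r hCne k1
  · -- |v.2| < |v.1|
    have hp : v.1 ≠ 0 := by
      intro hc; rw [hc, abs_zero] at hgt; have := abs_nonneg v.2; omega
    have := hcoe (-((r : ℤ) * v.1)) (by
      intro hc
      exact (mul_ne_zero hrz hp) (by omega))
    rw [singB r v.1 v.2 hgt, Finset.sum_singleton] at this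
    exact (mul_ne_zero (zpow_ne_zero _ hA) (zpow_ne_zero _ hB)) this
end

section
/- For every r ≥ 1, let D_r = {(i,j) ∈ ℤ^2 : max(|i|,|j|) ≤ r} be the r-neighborhood of the origin in the king grid, and let b, a be integers with b ≠ a. Then the Laurent polynomial g = ∑_{(i,j) ∈ D_r} x^{-i}y^{-j} − (b−a) has no line polynomial factor. -/
open AddMonoidAlgebra

/-- The `r`-neighborhood of the origin in the king grid. -/
noncomputable def kingBall (r : ℕ) : Finset (ℤ × ℤ) :=
  Finset.Icc (-(r : ℤ)) r ×ˢ Finset.Icc (-(r : ℤ)) r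

open Polynomial in
/-- Every nonzero complex number has a `d`-th "root" for any nonzero integer `d`. -/
lemma KingAux.exists_zpow_eq (z : ℂ) (hz : z ≠ 0) (d : ℤ) (hd : d ≠ 0) :
    ∃ β : ℂ, β ≠ 0 ∧ β ^ d = z := by
  have key : ∀ (w : ℂ), w ≠ 0 → ∀ n : ℕ, 0 < n → ∃ β : ℂ, β ≠ 0 ∧ β ^ (n : ℤ) = w := by
    intro w hw n hn
    obtain ⟨β, hβ⟩ := IsAlgClosed.exists_pow_nat_eq w hn (k := ℂ)
    refine ⟨β, ?_, by rw [zpow_natCast, hβ]⟩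
    rintro rfl
    exact hw (by simpa [zero_pow hn.ne'] using hβ.symm)
  rcases lt_or_gt_of_ne hd with h | h
  · obtain ⟨β, hβ0, hβ⟩ := key z⁻¹ (inv_ne_zero hz) (-d).toNat (by omega)
    refine ⟨β, hβ0, ?_⟩
    have : ((-d).toNat : ℤ) = -d := Int.toNat_of_nonneg (by omega)
    rw [this] at hβ
    rw [← inv_inv (β ^ d), ← zpow_neg, hβ, inv_inv]
  · obtain ⟨β, hβ0, hβ⟩ := key z hz d.toNat (by omega)
    have : (d.toNat : ℤ) = d := Int.toNat_of_nonneg (by omega)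
    rw [this] at hβ
    exact ⟨β, hβ0, hβ⟩

open Polynomial in
/-- A nontrivial finite combination `∑ g w · c ^ k w` with distinct integer exponents
has a nonzero complex root `c`. -/
lemma KingAux.exists_root_combo (s : Finset (ℤ × ℤ)) (g : ℤ × ℤ → ℂ) (k : ℤ × ℤ → ℤ)
    (hcard : 2 ≤ s.card) (hg : ∀ w ∈ s, g w ≠ 0) (hk : Set.InjOn k s) :
    ∃ c : ℂ, c ≠ 0 ∧ ∑ w ∈ s, g w * c ^ (k w) = 0 := by
  have hne : (s.image k).Nonempty := by
    rw [Finset.image_nonempty]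
    exact Finset.card_pos.mp (by omega)
  set m := (s.image k).min' hne with hm
  set M := (s.image k).max' hne with hM
  have hcard' : 1 < (s.image k).card := by
    rwa [Finset.card_image_of_injOn hk]
  have hmM : m < M := (s.image k).min'_lt_max'_of_card hcard'
  have hle : ∀ w ∈ s, m ≤ k w := fun w hw =>
    Finset.min'_le _ _ (Finset.mem_image_of_mem k hw)
  obtain ⟨wm, hwm, hkwm⟩ := Finset.mem_image.mp ((s.image k).min'_mem hne)
  obtain ⟨wM, hwM, hkwM⟩ := Finset.mem_image.mp ((s.image k).max'_mem hne)
  set P : Polynomial ℂ := ∑ w ∈ s, C (g w) * X ^ (k w - m).toNat with hP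
  have hcoeff0 : P.coeff 0 = g wm := by
    rw [hP, Polynomial.finset_sum_coeff]
    rw [Finset.sum_eq_single wm]
    · simp [hkwm, ← hm]
    · intro w hw hwne
      have h1 : m ≤ k w := hle w hw
      have h2 : k w ≠ m := fun h => hwne (hk hw hwm (h.trans hkwm.symm))
      have h4 : (k w - m).toNat ≠ 0 := by omega
      simp only [coeff_C_mul, coeff_X_pow]
      rw [if_neg (by omega), mul_zero]
    · intro h; exact absurd hwm h
  set D := (M - m).toNat with hD
  have hDpos : 0 < D := by omega
  have hcoeffD : P.coeff D = g wM := by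
    rw [hP, Polynomial.finset_sum_coeff]
    rw [Finset.sum_eq_single wM]
    · simp [hkwM, hD, ← hM]
    · intro w hw hwne
      have h1 : m ≤ k w := hle w hw
      have h2 : k w ≠ M := fun h => hwne (hk hw hwM (h.trans hkwM.symm))
      have h3 : k w ≤ M := Finset.le_max' _ _ (Finset.mem_image_of_mem k hw)
      have h4 : (k w - m).toNat ≠ D := by omega
      simp only [coeff_C_mul, coeff_X_pow]
      rw [if_neg (by omega), mul_zero]
    · intro h; exact absurd hwM h
  have hPdeg : 0 < P.degree := by
    have h1 : (D : ℕ) ≤ P.natDegree :=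
      le_natDegree_of_ne_zero (by rw [hcoeffD]; exact hg wM hwM)
    have hP0 : P ≠ 0 := fun h => hg wM hwM (by rw [← hcoeffD, h, Polynomial.coeff_zero])
    rw [← natDegree_pos_iff_degree_pos]
    omega
  obtain ⟨c, hc⟩ := Complex.exists_root hPdeg
  have hc0 : c ≠ 0 := by
    rintro rfl
    have := hc
    rw [IsRoot, ← coeff_zero_eq_eval_zero, hcoeff0] at this
    exact hg wm hwm this
  refine ⟨c, hc0, ?_⟩
  have heval : P.eval c = ∑ w ∈ s, g w * c ^ (k w - m).toNat := by
    rw [hP, Polynomial.eval_finset_sum]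
    simp
  have : ∑ w ∈ s, g w * c ^ (k w) = c ^ m * P.eval c := by
    rw [heval, Finset.mul_sum]
    refine Finset.sum_congr rfl fun w hw => ?_
    have h1 : m ≤ k w := hle w hw
    have h2 : ((k w - m).toNat : ℤ) = k w - m := Int.toNat_of_nonneg (by omega)
    rw [← zpow_natCast c, h2, zpow_sub₀ hc0]
    field_simp
  rw [this, hc.eq_zero, mul_zero]

/-- The symmetric power sum over `[-r, r]` vanishes at a nontrivial `(2r+1)`-st
root of unity. -/
lemma KingAux.sum_zpow_eq_zero (r : ℕ) (hr : 1 ≤ r) (ω : ℂ)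
    (hω1 : ω ^ (2 * r + 1) = 1) (hω : ω ≠ 1) :
    ∑ i ∈ Finset.Icc (-(r : ℤ)) (r : ℤ), ω ^ (-i) = 0 := by
  have hω0 : ω ≠ 0 := fun h => by simp [h] at hω1
  have key : ∑ i ∈ Finset.Icc (-(r : ℤ)) (r : ℤ), ω ^ (-i)
      = ∑ j ∈ Finset.range (2 * r + 1), ω ^ ((r : ℤ) - j) := by
    refine Finset.sum_nbij' (fun i => (i + r).toNat) (fun j => (j : ℤ) - r) ?_ ?_ ?_ ?_ ?_
    · intro i hi
      simp only [Finset.mem_Icc] at hi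
      simp only [Finset.mem_range]
      omega
    · intro j hj
      simp only [Finset.mem_range] at hj
      simp only [Finset.mem_Icc]
      omega
    · intro i hi
      simp only [Finset.mem_Icc] at hi
      show (((i + (r : ℤ)).toNat : ℕ) : ℤ) - r = i
      omega
    · intro j hj
      simp only [Finset.mem_range] at hj
      show (((j : ℤ) - (r : ℤ) + (r : ℤ)).toNat : ℕ) = j
      omega
    · intro i hi
      simp only [Finset.mem_Icc] at hi
      show ω ^ (-i) = ω ^ ((r : ℤ) - (((i + (r : ℤ)).toNat : ℕ) : ℤ))
      congr 1
      omega
  rw [key]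
  have : ∀ j ∈ Finset.range (2 * r + 1), ω ^ ((r : ℤ) - j) = ω ^ (r : ℤ) * (ω⁻¹) ^ j := by
    intro j hj
    rw [sub_eq_add_neg, zpow_add₀ hω0, zpow_neg, ← inv_zpow]
    simp only [zpow_natCast]
  rw [Finset.sum_congr rfl this, ← Finset.mul_sum]
  have hinv1 : ω⁻¹ ≠ 1 := fun h => hω (by rw [← inv_inv ω, h, inv_one])
  rw [geom_sum_eq hinv1]
  have : ω⁻¹ ^ (2 * r + 1) = 1 := by
    rw [inv_pow, hω1, inv_one]
  rw [this, sub_self, zero_div, mul_zero]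

/-- Evaluation of a Laurent monomial in `ℤ²` at a point `(α, β)` of the torus. -/
noncomputable def KingAux.evalHom (α β : ℂ) (hα : α ≠ 0) (hβ : β ≠ 0) :
    Multiplicative (ℤ × ℤ) →* ℂ where
  toFun z := α ^ (Multiplicative.toAdd z).1 * β ^ (Multiplicative.toAdd z).2
  map_one' := by simp
  map_mul' x y := by
    have h : Multiplicative.toAdd (x * y) = Multiplicative.toAdd x + Multiplicative.toAdd y := rfl
    simp only [h, Prod.fst_add, Prod.snd_add, zpow_add₀ hα, zpow_add₀ hβ]
    ring

/-- Evaluation of a Laurent polynomial in `ℤ²` at a point `(α, β)` of the torus,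
as an algebra homomorphism. -/
noncomputable def KingAux.ev (α β : ℂ) (hα : α ≠ 0) (hβ : β ≠ 0) :
    AddMonoidAlgebra ℂ (ℤ × ℤ) →ₐ[ℂ] ℂ :=
  AddMonoidAlgebra.lift ℂ ℂ (ℤ × ℤ) (KingAux.evalHom α β hα hβ)

lemma KingAux.ev_single (α β : ℂ) (hα : α ≠ 0) (hβ : β ≠ 0) (p : ℤ × ℤ) (c : ℂ) :
    KingAux.ev α β hα hβ (single p c) = c * (α ^ p.1 * β ^ p.2) := by
  simp [KingAux.ev, AddMonoidAlgebra.lift_single, KingAux.evalHom, smul_eq_mul]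

lemma KingAux.ev_apply (α β : ℂ) (hα : α ≠ 0) (hβ : β ≠ 0)
    (f : AddMonoidAlgebra ℂ (ℤ × ℤ)) :
    KingAux.ev α β hα hβ f = ∑ w ∈ f.coeff.support, f.coeff w * (α ^ w.1 * β ^ w.2) := by
  rw [KingAux.ev, AddMonoidAlgebra.lift_apply]
  rfl

theorem king_grid_no_line_poly_factor (r : ℕ) (hr : 1 ≤ r) (b a : ℤ) (hba : b ≠ a) :
    HasNoLinePolyFactor
      ((∑ p ∈ kingBall r, single (-p.1, -p.2) (1 : ℂ)) -
        single (0, 0) ((b : ℂ) - (a : ℂ))) := by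
  classical
  rintro φ ⟨hcard, u, v, hv, hline⟩ ⟨ψ, hf⟩
  -- the "slope" function along the line
  set k : ℤ × ℤ → ℤ := fun w => if h : ∃ m : ℤ, w = u + m • v then h.choose else 0 with hkdef
  have hkspec : ∀ w ∈ φ.coeff.support, w = u + k w • v := by
    intro w hw
    have h := hline w hw
    simp only [hkdef, dif_pos h]
    exact h.choose_spec
  have hinj : Set.InjOn k φ.coeff.support := by
    intro w1 h1 w2 h2 he
    rw [hkspec w1 h1, hkspec w2 h2, he]
  obtain ⟨c, hc0, hcsum⟩ := KingAux.exists_root_combo φ.coeff.support (fun w => φ.coeff w) k hcard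
    (fun w hw => Finsupp.mem_support_iff.mp hw) hinj
  -- a nontrivial (2r+1)-st root of unity
  obtain ⟨ω, hω1, hωne⟩ : ∃ ω : ℂ, ω ^ (2 * r + 1) = 1 ∧ ω ≠ 1 := by
    have hprim := Complex.isPrimitiveRoot_exp (2 * r + 1) (by omega)
    exact ⟨_, hprim.pow_eq_one, hprim.ne_one (by omega)⟩
  have hω0 : ω ≠ 0 := fun h => by simp [h] at hω1
  -- choose the evaluation point
  obtain ⟨α, β, hα, hβ, hαβ, hT⟩ :
      ∃ α β : ℂ, α ≠ 0 ∧ β ≠ 0 ∧ α ^ v.1 * β ^ v.2 = c ∧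
        ((∑ i ∈ Finset.Icc (-(r : ℤ)) (r : ℤ), α ^ (-i)) = 0 ∨
         (∑ i ∈ Finset.Icc (-(r : ℤ)) (r : ℤ), β ^ (-i)) = 0) := by
    by_cases hv2 : v.2 = 0
    · have hv1 : v.1 ≠ 0 := by
        intro h
        exact hv (Prod.ext (by simp [h]) (by simp [hv2]))
      obtain ⟨α, hα0, hαd⟩ := KingAux.exists_zpow_eq c hc0 v.1 hv1
      exact ⟨α, ω, hα0, hω0, by rw [hv2, zpow_zero, mul_one, hαd],
        Or.inr (KingAux.sum_zpow_eq_zero r hr ω hω1 hωne)⟩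
    · obtain ⟨β, hβ0, hβd⟩ := KingAux.exists_zpow_eq (c * (ω ^ v.1)⁻¹)
        (mul_ne_zero hc0 (inv_ne_zero (zpow_ne_zero _ hω0))) v.2 hv2
      refine ⟨ω, β, hω0, hβ0, ?_, Or.inl (KingAux.sum_zpow_eq_zero r hr ω hω1 hωne)⟩
      rw [hβd, mul_comm c, ← mul_assoc, mul_inv_cancel₀ (zpow_ne_zero _ hω0), one_mul]
  -- the line polynomial vanishes at the evaluation point
  have hφ0 : KingAux.ev α β hα hβ φ = 0 := by
    rw [KingAux.ev_apply]
    have hterm : ∀ w ∈ φ.coeff.support, φ.coeff w * (α ^ w.1 * β ^ w.2)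
        = (α ^ u.1 * β ^ u.2) * (φ.coeff w * c ^ (k w)) := by
      intro w hw
      have h1 : w.1 = u.1 + k w * v.1 := by
        conv_lhs => rw [hkspec w hw]
        simp [Prod.fst_add, smul_eq_mul]
      have h2 : w.2 = u.2 + k w * v.2 := by
        conv_lhs => rw [hkspec w hw]
        simp [Prod.snd_add, smul_eq_mul]
      rw [h1, h2, zpow_add₀ hα, zpow_add₀ hβ, mul_comm (k w) v.1, mul_comm (k w) v.2,
        zpow_mul, zpow_mul, ← hαβ, mul_zpow]
      ring
    rw [Finset.sum_congr rfl hterm, ← Finset.mul_sum, hcsum, mul_zero]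
  -- evaluate the king-grid polynomial
  have hevf : KingAux.ev α β hα hβ
      ((∑ p ∈ kingBall r, single (-p.1, -p.2) (1 : ℂ)) -
        single (0, 0) ((b : ℂ) - (a : ℂ)))
      = (∑ i ∈ Finset.Icc (-(r : ℤ)) (r : ℤ), α ^ (-i)) *
          (∑ j ∈ Finset.Icc (-(r : ℤ)) (r : ℤ), β ^ (-j)) - ((b : ℂ) - (a : ℂ)) := by
    rw [map_sub, map_sum]
    simp only [KingAux.ev_single, one_mul]
    rw [kingBall, Finset.sum_product, Finset.sum_mul_sum]
    norm_num
  rw [hf, map_mul, hφ0, zero_mul] at hevf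
  rcases hT with h | h <;> rw [h] at hevf <;>
    simp only [zero_mul, mul_zero, zero_sub, neg_eq_zero] at hevf <;>
  · apply hba
    have h2 : ((b : ℂ)) - ((a : ℂ)) = 0 := by linear_combination hevf
    have h3 : ((b : ℂ)) = ((a : ℂ)) := sub_eq_zero.mp h2
    exact_mod_cast h3
end

section
/- Let D = {(0,0), (±1,0), (0,±1), (1,1), (−1,−1)} be the 1-neighborhood of the origin in the triangular grid, and let b, a be integers with b − a ≠ −1. Then the Laurent polynomial g = x^{-1}y^{-1} + x^{-1} + y^{-1} + 1 − (b−a) + x + y + xy has no line polynomial factor. -/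
open AddMonoidAlgebra

noncomputable def Fu (x y : ℂˣ) : Multiplicative (ℤ × ℤ) →* ℂˣ where
  toFun w := x ^ (w.toAdd).1 * y ^ (w.toAdd).2
  map_one' := by simp
  map_mul' a b := by
    show x ^ ((a*b).toAdd).1 * y ^ ((a*b).toAdd).2 = _
    have : (a*b).toAdd = a.toAdd + b.toAdd := rfl
    rw [this]
    simp only [Prod.fst_add, Prod.snd_add, zpow_add]
    exact mul_mul_mul_comm _ _ _ _

noncomputable def Ev (x y : ℂˣ) : AddMonoidAlgebra ℂ (ℤ × ℤ) →ₐ[ℂ] ℂ :=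
  lift ℂ ℂ (ℤ × ℤ) ((Units.coeHom ℂ).comp (Fu x y))

@[simp] lemma Ev_single (x y : ℂˣ) (w : ℤ × ℤ) (r : ℂ) :
    Ev x y (single w r) = r * ((x ^ w.1 * y ^ w.2 : ℂˣ) : ℂ) := by
  rw [Ev, lift_single]; rfl

open scoped Classical in
noncomputable def kf (u v w : ℤ × ℤ) : ℤ :=
  if h : ∃ k : ℤ, w = u + k • v then h.choose else 0

lemma kf_spec {u v w : ℤ × ℤ} (h : ∃ k : ℤ, w = u + k • v) : w = u + kf u v w • v := by
  rw [kf]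
  split
  · exact h.choose_spec
  · exact absurd h (by assumption)

lemma exists_pow_eq (m : ℕ) (hm : m ≠ 0) (d : ℂ) (hd : d ≠ 0) : ∃ z : ℂ, z ≠ 0 ∧ z ^ m = d := by
  obtain ⟨z, hz⟩ := Complex.exists_root (f := Polynomial.X ^ m - Polynomial.C d) (by
    rw [Polynomial.degree_X_pow_sub_C (Nat.pos_of_ne_zero hm)]
    exact_mod_cast Nat.pos_of_ne_zero hm)
  have hz' : z ^ m = d := by
    have := hz
    simp only [Polynomial.IsRoot, Polynomial.eval_sub, Polynomial.eval_pow, Polynomial.eval_X,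
      Polynomial.eval_C, sub_eq_zero] at this
    exact this
  refine ⟨z, ?_, hz'⟩
  rintro rfl
  exact hd (by simpa [zero_pow hm] using hz'.symm)

lemma exists_zpow_eq_s11 (n : ℤ) (hn : n ≠ 0) (D : ℂˣ) : ∃ x : ℂˣ, x ^ n = D := by
  have key : ∀ (n : ℤ), 0 < n → ∀ D : ℂˣ, ∃ x : ℂˣ, x ^ n = D := by
    intro n hpos D
    obtain ⟨z, hz0, hz⟩ := exists_pow_eq n.toNat (by omega) (D : ℂ) (Units.ne_zero _)
    refine ⟨Units.mk0 z hz0, ?_⟩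
    ext
    rw [Units.val_zpow_eq_zpow_val, ← Int.toNat_of_nonneg (le_of_lt hpos), zpow_natCast]
    exact hz
  rcases lt_or_gt_of_ne hn with hneg | hpos
  · obtain ⟨x, hx⟩ := key (-n) (by omega) D⁻¹
    rw [zpow_neg] at hx
    exact ⟨x, inv_injective hx⟩
  · exact key n hpos D

lemma linePoly_exists_eval_zero (φ : AddMonoidAlgebra ℂ (ℤ × ℤ)) (hφ : IsLinePoly φ) :
    ∃ x y : ℂˣ, ((x : ℂ) = -1 ∨ (y : ℂ) = -1) ∧ Ev x y φ = 0 := by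
  classical
  obtain ⟨hcard, u, v, hv, hline⟩ := hφ
  have hne : φ.coeff.support.Nonempty := Finset.card_pos.mp (by omega)
  -- injectivity of kf on support
  have hspec : ∀ w ∈ φ.coeff.support, w = u + kf u v w • v := fun w hw => kf_spec (hline w hw)
  have hinj : ∀ w ∈ φ.coeff.support, ∀ w' ∈ φ.coeff.support, kf u v w = kf u v w' → w = w' := by
    intro w hw w' hw' hk
    rw [hspec w hw, hspec w' hw', hk]
  set K := φ.coeff.support.image (kf u v) with hK
  have hKne : K.Nonempty := hne.image _
  set N := K.min' hKne with hN
  set M := K.max' hKne with hM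
  have hKcard : 2 ≤ K.card := by
    rwa [hK, Finset.card_image_of_injOn hinj]
  have hNM : N < M := Finset.min'_lt_max'_of_card _ (by omega)
  have hNle : ∀ w ∈ φ.coeff.support, N ≤ kf u v w := by
    intro w hw
    exact Finset.min'_le _ _ (Finset.mem_image_of_mem _ hw)
  -- the univariate polynomial
  set p : Polynomial ℂ :=
    ∑ w ∈ φ.coeff.support, Polynomial.C (φ.coeff w) * Polynomial.X ^ (kf u v w - N).toNat with hp
  have hcoeff : ∀ w0 ∈ φ.coeff.support, p.coeff ((kf u v w0 - N).toNat) = φ.coeff w0 := by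
    intro w0 hw0
    rw [hp, Polynomial.finset_sum_coeff]
    rw [Finset.sum_eq_single_of_mem w0 hw0]
    · simp
    · intro w hw hne'
      have : (kf u v w - N).toNat ≠ (kf u v w0 - N).toNat := by
        intro heq
        apply hne'
        apply hinj w hw w0 hw0
        have h1 := hNle w hw
        have h2 := hNle w0 hw0
        omega
      simp [Polynomial.coeff_C_mul, Polynomial.coeff_X_pow, this, Ne.symm this]
  obtain ⟨w0, hw0, hkw0⟩ := Finset.mem_image.mp (Finset.min'_mem K hKne)
  obtain ⟨w1, hw1, hkw1⟩ := Finset.mem_image.mp (Finset.max'_mem K hKne)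
  rw [← hN] at hkw0
  rw [← hM] at hkw1
  have hc0 : p.coeff 0 ≠ 0 := by
    have e := hcoeff w0 hw0
    rw [hkw0, sub_self, Int.toNat_zero] at e
    rw [e]
    exact Finsupp.mem_support_iff.mp hw0
  have hdeg : 0 < p.degree := by
    have hc1 : p.coeff ((M - N).toNat) ≠ 0 := by
      have e := hcoeff w1 hw1
      rw [hkw1] at e
      rw [e]
      exact Finsupp.mem_support_iff.mp hw1
    have := Polynomial.le_degree_of_ne_zero hc1
    have hpos : 0 < (M - N).toNat := by omega
    calc (0 : WithBot ℕ) < ((M - N).toNat : ℕ) := by exact_mod_cast hpos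
    _ ≤ p.degree := this
  obtain ⟨c, hc⟩ := Complex.exists_root hdeg
  have hcne : c ≠ 0 := by
    rintro rfl
    rw [Polynomial.IsRoot, ← Polynomial.coeff_zero_eq_eval_zero] at hc
    exact hc0 hc
  set Cu : ℂˣ := Units.mk0 c hcne with hCu
  -- choose x, y
  have hxy : ∃ x y : ℂˣ, ((x : ℂ) = -1 ∨ (y : ℂ) = -1) ∧ x ^ v.1 * y ^ v.2 = Cu := by
    rcases eq_or_ne v.1 0 with h1 | h1
    · have h2 : v.2 ≠ 0 := by
        intro h2; exact hv (Prod.ext h1 h2)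
      obtain ⟨y, hy⟩ := exists_zpow_eq_s11 v.2 h2 (((-1 : ℂˣ) ^ v.1)⁻¹ * Cu)
      refine ⟨-1, y, Or.inl (by simp), ?_⟩
      rw [hy]
      group
    · obtain ⟨x, hx⟩ := exists_zpow_eq_s11 v.1 h1 (Cu * ((-1 : ℂˣ) ^ v.2)⁻¹)
      refine ⟨x, -1, Or.inr (by simp), ?_⟩
      rw [hx]
      group
  obtain ⟨x, y, hneg1, hCuv⟩ := hxy
  refine ⟨x, y, hneg1, ?_⟩
  -- the evaluation
  rw [Ev, lift_apply, Finsupp.sum]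
  have hterm : ∀ w ∈ φ.coeff.support,
      φ.coeff w • (((Units.coeHom ℂ).comp (Fu x y)) (Multiplicative.ofAdd w) : ℂ) =
      (((x ^ u.1 * y ^ u.2 : ℂˣ) : ℂ) * c ^ N) * (φ.coeff w * c ^ (kf u v w - N).toNat) := by
    intro w hw
    have hw' : w = u + kf u v w • v := hspec w hw
    set k := kf u v w with hkdef
    have hval : ((Fu x y) (Multiplicative.ofAdd w) : ℂˣ) =
        (x ^ u.1 * y ^ u.2) * Cu ^ k := by
      show x ^ w.1 * y ^ w.2 = _
      rw [← hCuv, hw']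
      have e1 : (u + k • v).1 = u.1 + k * v.1 := rfl
      have e2 : (u + k • v).2 = u.2 + k * v.2 := rfl
      rw [e1, e2, zpow_add, zpow_add, mul_zpow]
      rw [mul_comm k v.1, mul_comm k v.2, zpow_mul, zpow_mul]
      exact mul_mul_mul_comm _ _ _ _
    have hck : (c : ℂ) ^ k = c ^ N * c ^ (k - N).toNat := by
      rw [← zpow_natCast c (k - N).toNat, Int.toNat_of_nonneg (by
        have := hNle w hw; omega), ← zpow_add₀ hcne]
      congr 1
      omega
    rw [MonoidHom.comp_apply, Units.coeHom_apply, hval]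
    push_cast [Units.val_mul, Units.val_zpow_eq_zpow_val]
    rw [hCu, Units.val_mk0, hck]
    rw [smul_eq_mul]
    ring
  rw [Finset.sum_congr rfl hterm, ← Finset.mul_sum]
  have hsum : ∑ w ∈ φ.coeff.support, φ.coeff w * c ^ (kf u v w - N).toNat = p.eval c := by
    rw [hp, Polynomial.eval_finset_sum]
    apply Finset.sum_congr rfl
    intro w hw
    simp
  rw [hsum]
  rw [Polynomial.IsRoot] at hc
  rw [hc, mul_zero]

theorem triangular_grid_r1_no_line_poly_factor (b a : ℤ) (h : b - a ≠ -1) :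
    HasNoLinePolyFactor
      (single (-1, -1) 1 + single (-1, 0) 1 + single (0, -1) 1 +
        single (0, 0) (1 - ((b : ℂ) - (a : ℂ))) +
        single (1, 0) 1 + single (0, 1) 1 + single (1, 1) 1) := by
  intro φ hφ hdvd
  obtain ⟨ψ, hg⟩ := hdvd
  obtain ⟨x, y, hneg, hEφ⟩ := linePoly_exists_eval_zero φ hφ
  have h0 := congrArg (Ev x y) hg
  rw [map_mul, hEφ, zero_mul] at h0
  simp only [map_add, Ev_single, Units.val_mul, Units.val_zpow_eq_zpow_val,
    Units.val_inv_eq_inv_val, Units.val_one, zpow_neg, zpow_one, zpow_zero] at h0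
  have hX : (x : ℂ) ≠ 0 := x.ne_zero
  have hY : (y : ℂ) ≠ 0 := y.ne_zero
  have hba : ((b : ℂ) - a) ≠ -1 := by
    intro hh
    apply h
    have : ((b - a : ℤ) : ℂ) = ((-1 : ℤ) : ℂ) := by push_cast; linear_combination hh
    exact_mod_cast this
  apply hba
  rcases hneg with hx1 | hy1
  · rw [hx1] at h0
    field_simp at h0
    have h1 : (y : ℂ) * ((b : ℂ) - a + 1) = 0 := by linear_combination -h0
    linear_combination (mul_eq_zero.mp h1).resolve_left hY
  · rw [hy1] at h0
    field_simp at h0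
    have h1 : (x : ℂ) * ((b : ℂ) - a + 1) = 0 := by linear_combination -h0
    linear_combination (mul_eq_zero.mp h1).resolve_left hX
end
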